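/- arXiv:1112.4535 — 10 statements merged into one kernel-verified Lean document; each statement's English description precedes it below -/
import Mathlib

section
/- Let R be a (possibly noncommutative) ring and let q₁,…,qₙ be elements of R. For every index i with 1 ≤ i < n, the continuant satisfies the splitting identity [q₁,…,qₙ] = [q₁,…,q_{i−1}]·[q_{i+2},…,qₙ] + [q₁,…,q_i]·[q_{i+1},…,qₙ] (where a continuant of an empty sequence is 1). -/
/-- Auxiliary function: the continuant computed on the *reversed* sequence,
implementing the recurrence `[q₁,…,qₙ] = [q₁,…,q_{n−1}]·qₙ + [q₁,…,q_{n−2}]`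
together with `[] = 1` and `[q₁] = q₁`. -/
def contAux {R : Type*} [Ring R] : List R → R
  | [] => 1
  | [a] => a
  | a :: b :: l => contAux (b :: l) * a + contAux l

/-- The continuant `[q₁,…,qₙ]` of the finite sequence `q₁,…,qₙ`. -/
def continuant {R : Type*} [Ring R] (l : List R) : R :=
  contAux l.reverse

theorem contAux_snoc2 {R : Type*} [Ring R] :
    ∀ (m : List R) (b a : R), contAux (m ++ [b, a]) = a * contAux (m ++ [b]) + contAux m
  | [], b, a => by simp [contAux]
  | [c], b, a => by simp [contAux]; noncomm_ring
  | c :: d :: m, b, a => by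
      have h1 := contAux_snoc2 (d :: m) b a
      have h2 := contAux_snoc2 m b a
      simp only [List.cons_append, List.append_eq, contAux] at *
      rw [h1, h2]; noncomm_ring

theorem continuant_cons2 {R : Type*} [Ring R] (a b : R) (l : List R) :
    continuant (a :: b :: l) = a * continuant (b :: l) + continuant l := by
  simpa [continuant, List.reverse_cons, List.append_assoc] using
    contAux_snoc2 l.reverse b a

theorem cont_split {R : Type*} [Ring R] :
    ∀ (A : List R) (x y : R) (C : List R),
      continuant (A ++ x :: y :: C) =
        continuant A * continuant C + continuant (A ++ [x]) * continuant (y :: C)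
  | [], x, y, C => by
      simp only [List.nil_append, continuant_cons2]
      simp [continuant, contAux]
      abel
  | [a], x, y, C => by
      have h0 := cont_split [] x y C
      simp only [List.nil_append] at h0
      simp only [List.cons_append, List.nil_append]
      rw [continuant_cons2, h0]
      simp [continuant, contAux]
      noncomm_ring
  | a :: b :: A, x, y, C => by
      have h1 := cont_split (b :: A) x y C
      have h2 := cont_split A x y C
      simp only [List.cons_append] at *
      rw [continuant_cons2, h1, h2, continuant_cons2 a b A,
        show a :: b :: (A ++ [x]) = a :: b :: (A ++ [x]) from rfl,
        continuant_cons2 a b (A ++ [x])]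
      noncomm_ring

/-- **Splitting identity for continuants.**  In any (possibly noncommutative) ring,
for `1 ≤ i < n`,
`[q₁,…,qₙ] = [q₁,…,q_{i−1}]·[q_{i+2},…,qₙ] + [q₁,…,q_i]·[q_{i+1},…,qₙ]`. -/
theorem continuant_split {R : Type*} [Ring R] (n : ℕ) (q : Fin n → R)
    (i : ℕ) (hi1 : 1 ≤ i) (hi2 : i < n) :
    continuant (List.ofFn q) =
      continuant ((List.ofFn q).take (i - 1)) * continuant ((List.ofFn q).drop (i + 1)) +
        continuant ((List.ofFn q).take i) * continuant ((List.ofFn q).drop i) := by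
  set l := List.ofFn q with hl
  have hlen : l.length = n := by simp [hl]
  have hdlen : 2 ≤ (l.drop (i - 1)).length := by
    rw [List.length_drop, hlen]
    omega
  obtain ⟨x, y, C, hxy⟩ : ∃ x y C, l.drop (i - 1) = x :: y :: C := by
    match hD : l.drop (i - 1) with
    | [] => rw [hD] at hdlen; simp at hdlen
    | [x] => rw [hD] at hdlen; simp at hdlen
    | x :: y :: C => exact ⟨x, y, C, rfl⟩
  have hsplit : l = l.take (i - 1) ++ x :: y :: C := by
    rw [← hxy, List.take_append_drop]
  have htake : l.take i = l.take (i - 1) ++ [x] := by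
    have : i = (i - 1) + 1 := by omega
    rw [this, List.take_add, hxy]
    rfl
  have hdrop : l.drop i = y :: C := by
    have : i = (i - 1) + 1 := by omega
    rw [this, ← List.drop_drop, hxy]
    rfl
  have hdrop1 : l.drop (i + 1) = C := by
    have : i + 1 = (i - 1) + 2 := by omega
    rw [this, ← List.drop_drop, hxy]
    rfl
  rw [htake, hdrop, hdrop1]
  calc continuant l = continuant (l.take (i - 1) ++ x :: y :: C) := by rw [← hsplit]
    _ = _ := cont_split _ x y C
end

section
/- Let R be a (possibly noncommutative) ring and let q₁,…,qₙ be elements of R. For every integer h with 0 ≤ h ≤ n, the continuant of the sequence (−q_h, −q_{h−1}, …, −q₁, 0, q₁, q₂, …, qₙ) equals [q_{h+2}, q_{h+3}, …, qₙ] if 0 ≤ h ≤ n−2, equals 1 if h = n−1, and equals 0 if h = n. -/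
section Continuant

variable {R : Type*} [Ring R]

theorem contAux_append_pair (b a : R) (l : List R) :
    contAux (l ++ [b, a]) = a * contAux (l ++ [b]) + contAux l := by
  induction l using contAux.induct with
  | case1 => simp only [List.nil_append, contAux]
  | case2 c => simp only [List.cons_append, List.nil_append, contAux]; noncomm_ring
  | case3 c d l ih₁ ih₂ =>
    simp only [List.cons_append, contAux] at ih₁ ih₂ ⊢
    rw [ih₁, ih₂]
    noncomm_ring

@[simp]
theorem continuant_nil : continuant ([] : List R) = 1 := rfl

@[simp]
theorem continuant_singleton (a : R) : continuant [a] = a := rfl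

theorem continuant_cons_cons (a b : R) (l : List R) :
    continuant (a :: b :: l) = a * continuant (b :: l) + continuant l := by
  simpa [continuant] using contAux_append_pair b a l.reverse

theorem continuant_cons (a : R) {l : List R} (hl : l ≠ []) :
    continuant (a :: l) = a * continuant l + continuant l.tail := by
  obtain ⟨b, l, rfl⟩ := List.exists_cons_of_ne_nil hl
  exact continuant_cons_cons a b l

@[simp]
theorem continuant_zero_cons_cons (a : R) (l : List R) :
    continuant (0 :: a :: l) = continuant l := by
  simp [continuant_cons_cons]

theorem continuant_append_eq_of_eq {X Y : List R} (hX : X ≠ []) (hY : Y ≠ [])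
    (h : continuant X = continuant Y) (h_tail : continuant X.tail = continuant Y.tail)
    (A : List R) : continuant (A ++ X) = continuant (A ++ Y) := by
  suffices ∀ A : List R, continuant (A ++ X) = continuant (A ++ Y) ∧
      continuant (A ++ X).tail = continuant (A ++ Y).tail from (this A).1
  intro A
  induction A with
  | nil => exact ⟨h, h_tail⟩
  | cons a A ih =>
    refine ⟨?_, ih.1⟩
    rw [List.cons_append, List.cons_append, continuant_cons a (by simp [hX]),
      continuant_cons a (by simp [hY]), ih.1, ih.2]

theorem continuant_cons_zero_cons (u v : R) (B : List R) :
    continuant (u :: 0 :: v :: B) = continuant ((u + v) :: B) := by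
  rw [continuant_cons_cons, continuant_zero_cons_cons]
  cases B with
  | nil => simp
  | cons b B => rw [continuant_cons_cons, continuant_cons_cons]; noncomm_ring

theorem continuant_append_cons_zero_cons (A : List R) (u v : R) (B : List R) :
    continuant (A ++ u :: 0 :: v :: B) = continuant (A ++ (u + v) :: B) :=
  continuant_append_eq_of_eq (by simp) (by simp) (continuant_cons_zero_cons u v B)
    (continuant_zero_cons_cons v B) A

theorem continuant_neg_reverse_take_append_zero_cons (L : List R) {h : ℕ} (hh : h ≤ L.length) :
    continuant (((L.take h).map (fun x => -x)).reverse ++ 0 :: L) =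
      continuant (0 :: L.drop h) := by
  induction h generalizing L with
  | zero => simp
  | succ h ih =>
    obtain ⟨a, L, rfl⟩ := List.exists_cons_of_length_pos (by omega : 0 < L.length)
    simp only [List.take_succ_cons, List.map_cons, List.reverse_cons, List.append_assoc,
      List.singleton_append, List.drop_succ_cons]
    rw [continuant_append_cons_zero_cons, neg_add_cancel,
      ih L (by simpa using hh)]

end Continuant

/-- In any (possibly noncommutative) ring, for `0 ≤ h ≤ n` the continuant of the
sequence `(−q_h, −q_{h−1}, …, −q₁, 0, q₁, q₂, …, qₙ)` equals
`[q_{h+2}, q_{h+3}, …, qₙ]` if `h ≤ n−2`, equals `1` if `h = n−1`, and equals `0`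
if `h = n`. -/
theorem continuant_back_to_zero {R : Type*} [Ring R] (n : ℕ) (q : Fin n → R)
    (h : ℕ) (hhn : h ≤ n) :
    (h + 2 ≤ n →
      continuant ((((List.ofFn q).take h).map (fun x => -x)).reverse ++ 0 :: List.ofFn q) =
        continuant ((List.ofFn q).drop (h + 1))) ∧
    (h + 1 = n →
      continuant ((((List.ofFn q).take h).map (fun x => -x)).reverse ++ 0 :: List.ofFn q) = 1) ∧
    (h = n →
      continuant ((((List.ofFn q).take h).map (fun x => -x)).reverse ++ 0 :: List.ofFn q) = 0) := by
  have hlen : (List.ofFn q).length = n := List.length_ofFn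
  rw [continuant_neg_reverse_take_append_zero_cons _ (by omega)]
  refine ⟨fun hh => ?_, fun hh => ?_, fun hh => ?_⟩
  · rw [List.drop_eq_getElem_cons (by omega), continuant_zero_cons_cons]
  · rw [List.drop_eq_getElem_cons (by omega), continuant_zero_cons_cons,
      List.drop_eq_nil_of_le (by omega), continuant_nil]
  · rw [List.drop_eq_nil_of_le (by omega), continuant_singleton]
end

section
/- Let R be a commutative Euclidean domain equipped with a ring involution τ ↦ τ̄ (a star operation making R a star ring). If an element m of R admits a proper representation m = x·x̄ + y·ȳ, i.e. x and y are coprime (Rx + Ry = R), then there exists z ∈ R such that m divides z·z̄ + 1. -/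
/-- Let `R` be a commutative Euclidean domain with a ring involution `star`.  If `m`
admits a proper representation `m = x·x̄ + y·ȳ` (with `x`, `y` coprime), then `m`
divides `z·z̄ + 1` for some `z ∈ R`. -/
theorem dvd_conj_mul_add_one_of_proper_rep {R : Type*} [EuclideanDomain R] [StarRing R]
    (m x y : R) (hxy : IsCoprime x y) (hm : m = x * star x + y * star y) :
    ∃ z : R, m ∣ z * star z + 1 := by
  obtain ⟨a, b, hab⟩ := hxy
  have hab' : star a * star x + star b * star y = 1 := by
    have := congrArg star hab
    simpa [star_add, star_mul, mul_comm] using this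
  refine ⟨x * star b - y * star a, a * star a + b * star b, ?_⟩
  subst hm
  simp only [star_sub, star_mul, star_star]
  linear_combination (-(star a * star x + star b * star y)) * hab - hab'
end

section
/- Let R be a commutative ring and let x, y ∈ R be coprime (there exist a, b ∈ R with ax + by = 1). Then there exists z ∈ R such that x² + y² divides z² + 1. -/
/-- In a commutative ring, if `x` and `y` are coprime then `x² + y²` divides `z² + 1`
for some `z`. -/
theorem sq_add_sq_dvd_sq_add_one {R : Type*} [CommRing R] (x y : R)
    (hxy : IsCoprime x y) :
    ∃ z : R, x ^ 2 + y ^ 2 ∣ z ^ 2 + 1 := by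
  obtain ⟨a, b, h⟩ := hxy
  exact ⟨a * y - b * x, a ^ 2 + b ^ 2, by linear_combination (-(a*x + b*y + 1)) * h⟩
end

section
/- Let F be a field of characteristic different from 2 in which −1 is not a square, and let R = F[X] be the polynomial ring over F. If m ∈ F[X] divides z² + t² for some coprime polynomials z, t ∈ F[X], then m is an associate of a polynomial of the form x² + y² where x, y ∈ F[X] are coprime; that is, there exist coprime x, y ∈ F[X] and a unit u such that m = (x² + y²)·u. -/
/-!
Over `K = F(i)` one has `z² + t² = (z + it)(z - it)`, and the two factors are coprime in `K[X]`
because `z, t` are coprime and `2` is invertible. Hence `m = g₁g₂` in `K[X]` with `g₁ ∣ z + it`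
and `g₂ ∣ z - it`; as `m` is fixed by conjugation, `g₂` is an associate of `ḡ₁`. Writing
`g₁ = x + iy` with `x, y ∈ F[X]` gives `m ~ g₁ḡ₁ = x² + y²`, and `x, y` are coprime because
`g₁` and `ḡ₁` are.
-/

open Polynomial

theorem isCoprime_add_mul_sub_mul_iff {R : Type*} [CommRing R] {a b i : R} (hi : i ^ 2 = -1)
    (h2 : IsUnit (2 : R)) : IsCoprime (a + i * b) (a - i * b) ↔ IsCoprime a b := by
  constructor
  · rintro ⟨u, v, h⟩
    exact ⟨u + v, (u - v) * i, by linear_combination h⟩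
  · rintro ⟨u, v, h⟩
    obtain ⟨c, hc⟩ := h2.exists_right_inv
    exact ⟨c * (u - i * v), c * (u + i * v), by
      linear_combination (-2 * c * v * b) * hi + (u * a + v * b) * hc + h⟩

theorem exists_dvd_mul_apply_associated_of_dvd {R : Type*} [CommRing R] [IsDomain R]
    [DecompositionMonoid R] (σ : R →+* R) (hσ : Function.Involutive σ) {a m : R}
    (ha : IsCoprime a (σ a)) (hm : σ m = m) (h : m ∣ a * σ a) :
    ∃ g, g ∣ a ∧ Associated (g * σ g) m := by
  obtain ⟨g₁, g₂, hg₁, hg₂, rfl⟩ := exists_dvd_and_dvd_of_dvd_mul h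
  have hσg₁ : σ g₁ ∣ g₂ :=
    (ha.mono hg₁ (map_dvd σ hg₁)).symm.dvd_of_dvd_mul_left
      (hm ▸ map_dvd σ (dvd_mul_right g₁ g₂))
  have hσg₂ : σ g₂ ∣ g₁ :=
    (ha.mono (hσ a ▸ map_dvd σ hg₂) hg₂).dvd_of_dvd_mul_right
      (hm ▸ map_dvd σ (dvd_mul_left g₂ g₁))
  refine ⟨g₁, hg₁, associated_of_dvd_dvd (mul_dvd_mul_left g₁ hσg₁) (mul_dvd_mul_left g₁ ?_)⟩
  simpa only [hσ g₂] using map_dvd σ hσg₂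

abbrev AdjoinI (F : Type*) [Field F] : Type _ := AdjoinRoot (X ^ 2 + 1 : F[X])

namespace AdjoinI

variable {F : Type*} [Field F]

noncomputable def i : AdjoinI F := AdjoinRoot.root _

theorem i_sq : (i : AdjoinI F) ^ 2 = -1 := by
  have h := AdjoinRoot.eval₂_root (X ^ 2 + 1 : F[X])
  rw [eval₂_add, eval₂_X_pow, eval₂_one] at h
  exact eq_neg_of_add_eq_zero_left h

noncomputable def conj : AdjoinI F →ₐ[F] AdjoinI F :=
  AdjoinRoot.liftAlgHom _ (Algebra.ofId F _) (-i : AdjoinI F) (by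
    rw [eval₂_add, eval₂_X_pow, eval₂_one, neg_sq, i_sq, neg_add_cancel])

theorem conj_i : conj (i : AdjoinI F) = -i := AdjoinRoot.liftAlgHom_root ..

theorem conj_conj (k : AdjoinI F) : conj (conj k) = k := by
  have h : conj.comp conj = AlgHom.id F (AdjoinI F) :=
    AdjoinRoot.algHom_ext <| by
      change conj (conj i) = i
      rw [conj_i, map_neg, conj_i, neg_neg]
  exact AlgHom.congr_fun h k

theorem exists_eq_add_mul_i (k : AdjoinI F) :
    ∃ a b : F, k = algebraMap F _ a + algebraMap F _ b * i := by
  have hk : k ∈ Algebra.adjoin F {(i : AdjoinI F)} :=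
    AdjoinRoot.adjoinRoot_eq_top (f := (X ^ 2 + 1 : F[X])) ▸ trivial
  induction hk using Algebra.adjoin_induction with
  | mem x hx => exact ⟨0, 1, by rw [Set.mem_singleton_iff.mp hx]; simp⟩
  | algebraMap a => exact ⟨a, 0, by simp⟩
  | add x y _ _ hx hy =>
    obtain ⟨a, b, rfl⟩ := hx
    obtain ⟨c, d, rfl⟩ := hy
    exact ⟨a + c, b + d, by simp only [map_add]; ring⟩
  | mul x y _ _ hx hy =>
    obtain ⟨a, b, rfl⟩ := hx
    obtain ⟨c, d, rfl⟩ := hy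
    exact ⟨a * c - b * d, a * d + b * c, by
      simp only [map_add, map_sub, map_mul]
      linear_combination (algebraMap F _ b * algebraMap F _ d) * i_sq (F := F)⟩

noncomputable def incl : F[X] →+* (AdjoinI F)[X] := mapRingHom (algebraMap F (AdjoinI F))

noncomputable def conjX : (AdjoinI F)[X] →+* (AdjoinI F)[X] :=
  mapRingHom (conj : AdjoinI F →ₐ[F] AdjoinI F).toRingHom

theorem conjX_C (k : AdjoinI F) : conjX (C k) = C (conj k) := map_C _

theorem conjX_involutive : Function.Involutive (conjX : (AdjoinI F)[X] → (AdjoinI F)[X]) := by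
  intro w
  rw [conjX, coe_mapRingHom, Polynomial.map_map]
  convert Polynomial.map_id
  exact RingHom.ext conj_conj

theorem conjX_incl (x : F[X]) : conjX (incl x) = incl x := by
  rw [conjX, incl, coe_mapRingHom, coe_mapRingHom, Polynomial.map_map]
  exact congrArg x.map conj.comp_algebraMap

theorem conjX_incl_add_C_i_mul (x y : F[X]) :
    conjX (incl x + C i * incl y) = incl x - C i * incl y := by
  rw [map_add, map_mul, conjX_incl, conjX_incl, conjX_C, conj_i, C_neg]
  ring

theorem C_i_sq : (C i : (AdjoinI F)[X]) ^ 2 = -1 := by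
  rw [← C_pow, i_sq, C_neg, C_1]

theorem incl_add_C_i_mul_mul_sub (x y : F[X]) :
    (incl x + C i * incl y) * (incl x - C i * incl y) = incl (x ^ 2 + y ^ 2) := by
  rw [map_add, map_pow, map_pow]
  linear_combination (-incl y ^ 2) * C_i_sq (F := F)

theorem exists_eq_incl_add_C_i_mul (w : (AdjoinI F)[X]) :
    ∃ x y : F[X], w = incl x + C i * incl y := by
  induction w using Polynomial.induction_on' with
  | add p q hp hq =>
    obtain ⟨x, y, rfl⟩ := hp
    obtain ⟨x', y', rfl⟩ := hq
    exact ⟨x + x', y + y', by simp only [map_add]; ring⟩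
  | monomial n k =>
    obtain ⟨a, b, rfl⟩ := exists_eq_add_mul_i k
    refine ⟨monomial n a, monomial n b, ?_⟩
    simp only [incl, coe_mapRingHom, Polynomial.map_monomial, C_mul_monomial]
    rw [mul_comm i, ← map_add]

variable [Fact (Irreducible (X ^ 2 + 1 : F[X]))]

theorem associated_incl_iff {x y : F[X]} : Associated (incl x) (incl y) ↔ Associated x y := by
  simp only [← dvd_dvd_iff_associated, incl, coe_mapRingHom, map_dvd_map']

theorem isCoprime_incl_add_C_i_mul_iff (h2 : (2 : F) ≠ 0) {x y : F[X]} :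
    IsCoprime (incl x + C i * incl y) (incl x - C i * incl y) ↔ IsCoprime x y := by
  have h2' : IsUnit (2 : (AdjoinI F)[X]) := by
    rw [← map_ofNat (algebraMap F (AdjoinI F)[X]) 2]
    exact h2.isUnit.map _
  rw [isCoprime_add_mul_sub_mul_iff C_i_sq h2']
  exact isCoprime_map _

end AdjoinI

open AdjoinI in
theorem associate_sq_add_sq_of_dvd_general {F : Type*} [Field F]
    (hns : ∀ a : F, a ^ 2 ≠ -1)
    (m z t : Polynomial F) (hzt : IsCoprime z t) (hdvd : m ∣ z ^ 2 + t ^ 2) :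
    ∃ x y u : Polynomial F, IsCoprime x y ∧ IsUnit u ∧ m = (x ^ 2 + y ^ 2) * u := by
  have : Fact (Irreducible (X ^ 2 + 1 : F[X])) :=
    ⟨by simpa [sub_eq_add_neg] using X_pow_sub_C_irreducible_of_prime Nat.prime_two hns⟩
  have h2 : (2 : F) ≠ 0 := fun h => hns 1 (by linear_combination h)
  set A := incl z + C i * incl t
  have hA : IsCoprime A (conjX A) := by
    rw [conjX_incl_add_C_i_mul]
    exact (isCoprime_incl_add_C_i_mul_iff h2).2 hzt
  have hmA : incl m ∣ A * conjX A := by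
    rw [conjX_incl_add_C_i_mul, incl_add_C_i_mul_mul_sub]
    exact map_dvd incl hdvd
  obtain ⟨g, hgA, hg⟩ :=
    exists_dvd_mul_apply_associated_of_dvd conjX conjX_involutive hA (conjX_incl m) hmA
  obtain ⟨x, y, rfl⟩ := exists_eq_incl_add_C_i_mul g
  have hxy : IsCoprime x y := by
    rw [← isCoprime_incl_add_C_i_mul_iff h2, ← conjX_incl_add_C_i_mul]
    exact hA.mono hgA (map_dvd conjX hgA)
  rw [conjX_incl_add_C_i_mul, incl_add_C_i_mul_mul_sub, associated_incl_iff] at hg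
  obtain ⟨u, hu⟩ := hg
  exact ⟨x, y, u, hxy, u.isUnit, hu.symm⟩

/-- Let `F` be a field of characteristic different from 2 in which `−1` is not a square.
If `m ∈ F[X]` divides `z² + t²` for some coprime `z, t ∈ F[X]`, then `m` is an associate
of `x² + y²` for some coprime `x, y ∈ F[X]`. -/
theorem associate_sq_add_sq_of_dvd {F : Type*} [Field F]
    (hchar : ringChar F ≠ 2) (hns : ∀ a : F, a ^ 2 ≠ -1)
    (m z t : Polynomial F) (hzt : IsCoprime z t) (hdvd : m ∣ z ^ 2 + t ^ 2) :
    ∃ x y u : Polynomial F, IsCoprime x y ∧ IsUnit u ∧ m = (x ^ 2 + y ^ 2) * u :=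
  associate_sq_add_sq_of_dvd_general hns m z t hzt hdvd
end

section
/- If a polynomial P with integer coefficients is the sum of the squares of two polynomials with rational coefficients, then P is also the sum of the squares of two polynomials with integer coefficients. That is, if there exist a, b ∈ ℚ[X] with P = a² + b² (viewing P in ℚ[X]), then there exist c, d ∈ ℤ[X] with P = c² + d². -/
/-!
Clearing denominators gives `A² + B² = r² P` in `ℤ[X]` with `r ≠ 0`, and it suffices to
remove the prime factors `p` of `r` one at a time. If `p ≡ 3 mod 4`, then `-1` is not a square
mod `p`, so `A² + B² ≡ 0` forces `p ∣ A` and `p ∣ B`. Otherwise `p = x² + y²` by Fermat, and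
`A² + B² = p Q` removes one factor `p`: modulo `p` the product of `xA + yB` and `xA - yB` is
`x² (A² + B²) ≡ 0`, so up to the sign of `y`, `p` divides `xA + yB`, hence also `xB - yA`, and
`(xA + yB)² + (xB - yA)² = (x² + y²)(A² + B²) = p² Q`.
-/

open Polynomial

namespace Polynomial

theorem C_dvd_iff_zmod (n : ℕ) (A : ℤ[X]) :
    C (n : ℤ) ∣ A ↔ A.map (Int.castRingHom (ZMod n)) = 0 := by
  rw [C_dvd_iff_dvd_coeff, Polynomial.ext_iff]
  simp [ZMod.intCast_zmod_eq_zero_iff_dvd]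

theorem eq_zero_of_sq_add_sq_eq_zero {K : Type*} [Field K] (hK : ¬IsSquare (-1 : K))
    {a b : K[X]} (h : a ^ 2 + b ^ 2 = 0) : b = 0 := by
  by_contra hb
  have hlc : a.leadingCoeff ^ 2 = -b.leadingCoeff ^ 2 := by
    simpa [leadingCoeff_pow] using congrArg leadingCoeff (eq_neg_of_add_eq_zero_left h)
  have hb' : b.leadingCoeff ≠ 0 := leadingCoeff_ne_zero.mpr hb
  refine hK ⟨a.leadingCoeff / b.leadingCoeff, ?_⟩
  field_simp
  linear_combination -hlc

end Polynomial

section SumTwoSquares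

variable {R : Type*} [CommRing R] [IsDomain R]

theorem not_dvd_of_sq_add_sq_eq_prime {p x y : R} (hp : Prime p) (h : x ^ 2 + y ^ 2 = p) :
    ¬p ∣ x := by
  intro hx
  have hy : p ∣ y := hp.dvd_of_dvd_pow (n := 2) <| by
    rw [show y ^ 2 = p - x ^ 2 by rw [← h]; ring]
    exact dvd_sub dvd_rfl (dvd_pow hx two_ne_zero)
  have hp2 : p ^ 2 ∣ x ^ 2 + y ^ 2 := dvd_add (pow_dvd_pow_of_dvd hx 2) (pow_dvd_pow_of_dvd hy 2)
  rw [h] at hp2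
  have := (pow_dvd_pow_iff hp.ne_zero hp.not_isUnit (n := 2) (m := 1)).mp (by rwa [pow_one])
  omega

theorem mul_sub_mul_eq_zero_of_mul_add_mul_eq_zero {s t a b : R} (hs : s ≠ 0)
    (hst : s ^ 2 + t ^ 2 = 0) (h : s * a + t * b = 0) : s * b - t * a = 0 := by
  have : s * (s * b - t * a) = 0 := by linear_combination b * hst - t * h
  exact (mul_eq_zero.mp this).resolve_left hs

theorem exists_sq_add_sq_of_dvd_of_dvd {r u v q : R} (hr : r ≠ 0) (hu : r ∣ u) (hv : r ∣ v)
    (h : u ^ 2 + v ^ 2 = r ^ 2 * q) : ∃ c d, q = c ^ 2 + d ^ 2 := by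
  obtain ⟨c, rfl⟩ := hu
  obtain ⟨d, rfl⟩ := hv
  exact ⟨c, d, mul_left_cancel₀ (pow_ne_zero 2 hr) (by linear_combination -h)⟩

end SumTwoSquares

section IntPolynomial

variable {p : ℕ} {A B Q : ℤ[X]}

theorem exists_sq_add_sq_of_C_dvd (hp : p.Prime) {x y : ℤ} (hxy : x ^ 2 + y ^ 2 = p)
    (h : A ^ 2 + B ^ 2 = C (p : ℤ) * Q) (hdvd : C (p : ℤ) ∣ C x * A + C y * B) :
    ∃ c d, Q = c ^ 2 + d ^ 2 := by
  have := Fact.mk hp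
  set f := Int.castRingHom (ZMod p)
  have hx : C (f x) ≠ 0 := by
    rw [Ne, C_eq_zero, eq_intCast, ZMod.intCast_zmod_eq_zero_iff_dvd]
    exact not_dvd_of_sq_add_sq_eq_prime (Nat.prime_iff_prime_int.mp hp) hxy
  have hxy' : C (f x) ^ 2 + C (f y) ^ 2 = 0 := by
    rw [← C_pow, ← C_pow, ← C_add, ← map_pow, ← map_pow, ← map_add, hxy]
    simp [f]
  have hdvd' : C (p : ℤ) ∣ C x * B - C y * A := by
    rw [C_dvd_iff_zmod] at hdvd ⊢
    rw [Polynomial.map_add, Polynomial.map_mul, Polynomial.map_mul, map_C, map_C] at hdvd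
    rw [Polynomial.map_sub, Polynomial.map_mul, Polynomial.map_mul, map_C, map_C]
    exact mul_sub_mul_eq_zero_of_mul_add_mul_eq_zero hx hxy' hdvd
  have hCp : C (p : ℤ) = C x ^ 2 + C y ^ 2 := by rw [← C_pow, ← C_pow, ← C_add, hxy]
  refine exists_sq_add_sq_of_dvd_of_dvd (by simpa using hp.ne_zero) hdvd hdvd' ?_
  linear_combination (C x ^ 2 + C y ^ 2) * h - C (p : ℤ) * Q * hCp

theorem exists_sq_add_sq_of_sq_add_sq_eq_C_mul (hp : p.Prime) {x y : ℤ}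
    (hxy : x ^ 2 + y ^ 2 = p) (h : A ^ 2 + B ^ 2 = C (p : ℤ) * Q) :
    ∃ c d, Q = c ^ 2 + d ^ 2 := by
  have hCp : C (p : ℤ) = C x ^ 2 + C y ^ 2 := by rw [← C_pow, ← C_pow, ← C_add, hxy]
  have hprod : C (p : ℤ) ∣ (C x * A + C y * B) * (C x * A + C (-y) * B) :=
    ⟨C x ^ 2 * Q - B ^ 2, by rw [C_neg]; linear_combination C x ^ 2 * h + B ^ 2 * hCp⟩
  rcases (prime_C_iff.mpr (Nat.prime_iff_prime_int.mp hp)).dvd_or_dvd hprod with hd | hd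
  · exact exists_sq_add_sq_of_C_dvd hp hxy h hd
  · exact exists_sq_add_sq_of_C_dvd hp (by rwa [neg_sq]) h hd

theorem exists_sq_add_sq_of_sq_add_sq_eq_C_sq_mul_of_mod_four_eq_three (hp : p.Prime)
    (hp3 : p % 4 = 3) (h : A ^ 2 + B ^ 2 = C (p : ℤ) ^ 2 * Q) : ∃ c d, Q = c ^ 2 + d ^ 2 := by
  have := Fact.mk hp
  have hK : ¬IsSquare (-1 : ZMod p) := by simpa [ZMod.exists_sq_eq_neg_one_iff] using hp3
  set f := Int.castRingHom (ZMod p)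
  have hmap : A.map f ^ 2 + B.map f ^ 2 = 0 := by simpa [f] using congrArg (map f) h
  have hA := (C_dvd_iff_zmod p A).mpr <|
    eq_zero_of_sq_add_sq_eq_zero hK ((add_comm _ _).trans hmap)
  have hB := (C_dvd_iff_zmod p B).mpr (eq_zero_of_sq_add_sq_eq_zero hK hmap)
  exact exists_sq_add_sq_of_dvd_of_dvd (by simpa using hp.ne_zero) hA hB h

theorem exists_sq_add_sq_of_sq_add_sq_eq_C_prime_sq_mul (hp : p.Prime)
    (h : A ^ 2 + B ^ 2 = C (p : ℤ) ^ 2 * Q) : ∃ c d, Q = c ^ 2 + d ^ 2 := by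
  have := Fact.mk hp
  by_cases hp3 : p % 4 = 3
  · exact exists_sq_add_sq_of_sq_add_sq_eq_C_sq_mul_of_mod_four_eq_three hp hp3 h
  obtain ⟨x, y, hxy⟩ := Nat.Prime.sq_add_sq hp3
  have hxy : (x : ℤ) ^ 2 + (y : ℤ) ^ 2 = p := by exact_mod_cast hxy
  obtain ⟨c, d, hcd⟩ := exists_sq_add_sq_of_sq_add_sq_eq_C_mul hp hxy (Q := C (p : ℤ) * Q)
    (by rw [h]; ring)
  exact exists_sq_add_sq_of_sq_add_sq_eq_C_mul hp hxy hcd.symm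

theorem exists_sq_add_sq_of_sq_add_sq_eq_C_sq_mul {r : ℤ} (hr : r ≠ 0)
    (h : A ^ 2 + B ^ 2 = C r ^ 2 * Q) : ∃ c d, Q = c ^ 2 + d ^ 2 := by
  induction r using UniqueFactorizationMonoid.induction_on_prime generalizing A B Q with
  | h₁ => exact absurd rfl hr
  | h₂ u hu =>
    rw [← C_pow, Int.isUnit_sq hu, C_1, one_mul] at h
    exact ⟨A, B, h.symm⟩
  | h₃ a q ha hq ih =>
    have hCq : C (q.natAbs : ℤ) ^ 2 = C q ^ 2 := by rw [← C_pow, ← C_pow, Int.natAbs_sq]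
    obtain ⟨c, d, hcd⟩ := exists_sq_add_sq_of_sq_add_sq_eq_C_prime_sq_mul
      (Int.prime_iff_natAbs_prime.mp hq) (A := A) (B := B) (Q := C a ^ 2 * Q)
      (by rw [hCq, h, C_mul]; ring)
    exact ih ha hcd.symm

theorem exists_sq_add_sq_eq_C_sq_mul_of_map_eq {P : ℤ[X]} {a b : ℚ[X]}
    (h : P.map (Int.castRingHom ℚ) = a ^ 2 + b ^ 2) :
    ∃ r ≠ 0, ∃ A B : ℤ[X], A ^ 2 + B ^ 2 = C r ^ 2 * P := by
  obtain ⟨k, hk, hA⟩ := IsLocalization.integerNormalization_spec (nonZeroDivisors ℤ) a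
  obtain ⟨l, hl, hB⟩ := IsLocalization.integerNormalization_spec (nonZeroDivisors ℤ) b
  rw [algebraMap_int_eq] at hA hB
  refine ⟨k * l, mul_ne_zero (nonZeroDivisors.ne_zero hk) (nonZeroDivisors.ne_zero hl),
    C l * IsLocalization.integerNormalization (nonZeroDivisors ℤ) a,
    C k * IsLocalization.integerNormalization (nonZeroDivisors ℤ) b,
    map_injective (Int.castRingHom ℚ) Int.cast_injective ?_⟩
  simp only [eq_intCast, Polynomial.map_add, Polynomial.map_pow, Polynomial.map_mul,
    Polynomial.map_intCast, Int.cast_mul, hA, hB, h, zsmul_eq_mul]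
  ring

end IntPolynomial

/-- If a polynomial with integer coefficients is a sum of two squares of polynomials with
rational coefficients, then it is a sum of two squares of polynomials with integer
coefficients. -/
theorem int_poly_sum_two_squares_of_rat (P : Polynomial ℤ)
    (h : ∃ a b : Polynomial ℚ, P.map (Int.castRingHom ℚ) = a ^ 2 + b ^ 2) :
    ∃ c d : Polynomial ℤ, P = c ^ 2 + d ^ 2 := by
  obtain ⟨a, b, hab⟩ := h
  obtain ⟨r, hr, A, B, hAB⟩ := exists_sq_add_sq_eq_C_sq_mul_of_map_eq hab
  exact exists_sq_add_sq_of_sq_add_sq_eq_C_sq_mul hr hAB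
end

section
/- Every positive integer m can be written in the form m = x² − xy + y² + z² − zu + u² with x, y, z, u integers. -/
open Polynomial

private def EisS (m : ℤ) : Prop :=
  ∃ x y z u : ℤ, m = x ^ 2 - x * y + y ^ 2 + z ^ 2 - z * u + u ^ 2

private lemma N2_nonneg (x y : ℤ) : 0 ≤ x ^ 2 - x * y + y ^ 2 := by
  nlinarith [sq_nonneg (2 * x - y), sq_nonneg y]

private lemma N2_eq_zero {x y : ℤ} (h : x ^ 2 - x * y + y ^ 2 = 0) : x = 0 ∧ y = 0 := by
  constructor <;> nlinarith [sq_nonneg (2 * x - y), sq_nonneg (2 * y - x), sq_nonneg y, sq_nonneg x]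

private lemma EisS.mul {m n : ℤ} (hm : EisS m) (hn : EisS n) : EisS (m * n) := by
  obtain ⟨a, b, c, d, hm⟩ := hm
  obtain ⟨x, y, z, w, hn⟩ := hn
  exact ⟨a * x - a * y + b * y + c * z - c * w + d * w,
    b * x - a * y + d * z - c * w,
    c * x - d * y - a * z + b * w,
    c * y + d * x - d * y - a * w - b * z + b * w,
    by rw [hm, hn]; ring⟩

/-- Reduction modulo `n` minimizing the Eisenstein norm. -/
private lemma reduce (n : ℤ) (hn : 0 < n) (a b : ℤ) :
    ∃ s t : ℤ, 16 * ((a + n * s) ^ 2 - (a + n * s) * (b + n * t) + (b + n * t) ^ 2) ≤ 7 * n ^ 2 := by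
  have h2n : (0 : ℤ) < 2 * n := by linarith
  set t : ℤ := -((2 * b + n) / (2 * n)) with ht
  have hmod1 : (2 * b + n) % (2 * n) = 2 * b + n - 2 * n * ((2 * b + n) / (2 * n)) := by
    rw [Int.emod_def]
  have h1a : 0 ≤ (2 * b + n) % (2 * n) := Int.emod_nonneg _ (by linarith)
  have h1b : (2 * b + n) % (2 * n) < 2 * n := Int.emod_lt_of_pos _ h2n
  set y : ℤ := b + n * t with hy
  have hy1 : -n ≤ 2 * y := by rw [hy, ht]; linarith [hmod1 ▸ h1a]
  have hy2 : 2 * y < n := by rw [hy, ht]; linarith [hmod1 ▸ h1b]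
  set s : ℤ := -((2 * a - y + n) / (2 * n)) with hs
  have hmod2 : (2 * a - y + n) % (2 * n) = 2 * a - y + n - 2 * n * ((2 * a - y + n) / (2 * n)) := by
    rw [Int.emod_def]
  have h2a : 0 ≤ (2 * a - y + n) % (2 * n) := Int.emod_nonneg _ (by linarith)
  have h2b : (2 * a - y + n) % (2 * n) < 2 * n := Int.emod_lt_of_pos _ h2n
  set x : ℤ := a + n * s with hx
  have hx1 : -n ≤ 2 * x - y := by rw [hx, hs]; linarith [hmod2 ▸ h2a]
  have hx2 : 2 * x - y < n := by rw [hx, hs]; linarith [hmod2 ▸ h2b]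
  refine ⟨s, t, ?_⟩
  have e1 : 0 ≤ (n - (2 * x - y)) * (n + (2 * x - y)) :=
    mul_nonneg (by linarith) (by linarith)
  have e2 : 0 ≤ (n - 2 * y) * (n + 2 * y) := mul_nonneg (by linarith) (by linarith)
  nlinarith [e1, e2]

/-- For every prime `p ∉ {3}`, `-1` is an Eisenstein norm mod `p`. -/
private lemma exists_norm_neg_one (p : ℕ) (hp : p.Prime) (h2 : p ≠ 2) (h3 : p ≠ 3) :
    ∃ A B : ℤ, (p : ℤ) ∣ (A ^ 2 - A * B + B ^ 2 + 1) := by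
  haveI : Fact p.Prime := ⟨hp⟩
  have hodd : p % 2 = 1 := hp.eq_two_or_odd.resolve_left h2
  have h3' : (3 : ZMod p) ≠ 0 := by
    intro h
    have : ((3 : ℕ) : ZMod p) = 0 := by exact_mod_cast h
    rw [ZMod.natCast_eq_zero_iff] at this
    exact h3 ((Nat.prime_dvd_prime_iff_eq hp (by norm_num)).mp this)
  obtain ⟨u, v, huv⟩ :=
    FiniteField.exists_root_sum_quadratic (f := (X ^ 2 : (ZMod p)[X]))
      (g := C 3 * X ^ 2 + C 1) (degree_X_pow 2)
      (by compute_degree!) (by rw [ZMod.card]; exact hodd)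
  simp only [eval_pow, eval_X, eval_add, eval_mul, eval_C] at huv
  obtain ⟨A, hA⟩ := ZMod.intCast_surjective (u + v)
  obtain ⟨B, hB⟩ := ZMod.intCast_surjective (2 * v)
  refine ⟨A, B, (ZMod.intCast_zmod_eq_zero_iff_dvd _ p).mp ?_⟩
  push_cast
  rw [hA, hB]
  linear_combination huv

/-- Descent: if some multiple `n * p` with `0 < n < p` is a sum of two Eisenstein
norms, then so is `p`. -/
private lemma eis_descent (p : ℕ) (hp : p.Prime) :
    ∀ n : ℕ, 0 < n → n < p → EisS ((n : ℤ) * p) → EisS (p : ℤ) := by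
  intro n
  induction n using Nat.strong_induction_on with
  | _ n ih =>
    intro hn0 hnp hS
    by_cases hn1 : n = 1
    · subst hn1; simpa using hS
    have hn2 : 2 ≤ n := by omega
    obtain ⟨a, b, c, d, h⟩ := hS
    have hnZ : (0 : ℤ) < (n : ℤ) := by exact_mod_cast hn0
    obtain ⟨s, t, hbd1⟩ := reduce (n : ℤ) hnZ a b
    obtain ⟨u, v, hbd2⟩ := reduce (n : ℤ) hnZ c d
    set n' : ℤ := (p : ℤ) + (2 * a * s - a * t - b * s + 2 * b * t
        + 2 * c * u - c * v - d * u + 2 * d * v)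
        + (n : ℤ) * ((s ^ 2 - s * t + t ^ 2) + (u ^ 2 - u * v + v ^ 2)) with hn'
    have hr : ((a + n * s) ^ 2 - (a + n * s) * (b + n * t) + (b + n * t) ^ 2)
        + ((c + n * u) ^ 2 - (c + n * u) * (d + n * v) + (d + n * v) ^ 2)
        = (n : ℤ) * n' := by
      rw [hn']; linear_combination -h
    have hN1 := N2_nonneg (a + n * s) (b + n * t)
    have hN2 := N2_nonneg (c + n * u) (d + n * v)
    have hn'nonneg : 0 ≤ n' := by nlinarith [hr]
    rcases eq_or_lt_of_le hn'nonneg with hz | hn'pos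
    · -- degenerate case: everything divisible by n, contradiction
      exfalso
      have hsum0 : ((a + n * s) ^ 2 - (a + n * s) * (b + n * t) + (b + n * t) ^ 2)
          + ((c + n * u) ^ 2 - (c + n * u) * (d + n * v) + (d + n * v) ^ 2) = 0 := by
        rw [hr, ← hz, mul_zero]
      have hA0 : (a + n * s) ^ 2 - (a + n * s) * (b + n * t) + (b + n * t) ^ 2 = 0 := by
        linarith
      have hB0 : (c + n * u) ^ 2 - (c + n * u) * (d + n * v) + (d + n * v) ^ 2 = 0 := by
        linarith
      obtain ⟨ha, hb⟩ := N2_eq_zero hA0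
      obtain ⟨hc, hd⟩ := N2_eq_zero hB0
      have ha' : a = -((n : ℤ) * s) := by linarith
      have hb' : b = -((n : ℤ) * t) := by linarith
      have hc' : c = -((n : ℤ) * u) := by linarith
      have hd' : d = -((n : ℤ) * v) := by linarith
      rw [ha', hb', hc', hd'] at h
      have key : (n : ℤ) * (p : ℤ) = (n : ℤ) * ((n : ℤ) *
          (s ^ 2 - s * t + t ^ 2 + (u ^ 2 - u * v + v ^ 2))) := by
        linear_combination h
      have hdvd : (n : ℤ) ∣ (p : ℤ) :=
        ⟨_, mul_left_cancel₀ (ne_of_gt hnZ) key⟩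
      have hdvdN : n ∣ p := Int.natCast_dvd_natCast.mp hdvd
      rcases hp.eq_one_or_self_of_dvd n hdvdN with h1 | h1 <;> omega
    · -- proper descent step
      have h16 : 16 * ((n : ℤ) * n') ≤ 14 * (n : ℤ) ^ 2 := by
        rw [← hr]; linarith
      have hn'lt : n' < (n : ℤ) := by nlinarith
      have hSn' : EisS (n' * p) := by
        refine ⟨(p : ℤ) + (a * s - a * t + b * t + c * u - c * v + d * v),
          b * s - a * t + d * u - c * v,
          c * s - d * t - a * u + b * v,
          c * t + d * s - d * t - a * v - b * u + b * v, ?_⟩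
        linear_combination (p : ℤ) * hn' + (s ^ 2 - s * t + t ^ 2 + u ^ 2 - u * v + v ^ 2) * h
      have hk : ((n'.toNat : ℤ)) = n' := Int.toNat_of_nonneg hn'nonneg
      refine ih n'.toNat ?_ ?_ ?_ ?_
      · omega
      · omega
      · have : (n : ℤ) < (p : ℤ) := by exact_mod_cast hnp
        omega
      · rw [hk]; exact hSn'

private lemma eis_prime (p : ℕ) (hp : p.Prime) : EisS (p : ℤ) := by
  by_cases h2 : p = 2
  · exact ⟨1, 0, 1, 0, by rw [h2]; norm_num⟩
  by_cases h3 : p = 3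
  · exact ⟨1, -1, 0, 0, by rw [h3]; norm_num⟩
  obtain ⟨A, B, hdvd⟩ := exists_norm_neg_one p hp h2 h3
  have hpZ : (0 : ℤ) < (p : ℤ) := by exact_mod_cast hp.pos
  obtain ⟨s, t, hbd⟩ := reduce (p : ℤ) hpZ A B
  have hdvd2 : (p : ℤ) ∣ ((A + p * s) ^ 2 - (A + p * s) * (B + p * t) + (B + p * t) ^ 2 + 1) := by
    obtain ⟨k, hk⟩ := hdvd
    exact ⟨k + 2 * A * s - A * t - B * s + 2 * B * t + (p : ℤ) * (s ^ 2 - s * t + t ^ 2),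
      by linear_combination hk⟩
  obtain ⟨n, hn⟩ := hdvd2
  have hNpos : 0 < (A + p * s) ^ 2 - (A + p * s) * (B + p * t) + (B + p * t) ^ 2 + 1 := by
    linarith [N2_nonneg (A + p * s) (B + p * t)]
  have hp2 : (2 : ℤ) ≤ (p : ℤ) := by exact_mod_cast hp.two_le
  have hnpos : 0 < n := by nlinarith
  have hnlt : n < (p : ℤ) := by nlinarith
  have hS : EisS ((n.toNat : ℤ) * p) := by
    refine ⟨A + p * s, B + p * t, 1, 0, ?_⟩
    rw [Int.toNat_of_nonneg (le_of_lt hnpos)]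
    linear_combination -hn
  exact eis_descent p hp n.toNat (by omega) (by omega) hS

private lemma eis_list (l : List ℕ) (h : ∀ q ∈ l, Nat.Prime q) : EisS ((l.prod : ℤ)) := by
  induction l with
  | nil => exact ⟨1, 0, 0, 0, by norm_num⟩
  | cons p l ihl =>
    rw [List.prod_cons, Nat.cast_mul]
    exact EisS.mul (eis_prime p (h p (by simp)))
      (ihl fun q hq => h q (List.mem_cons_of_mem _ hq))

/-- Every positive integer is of the form `x² − xy + y² + z² − zu + u²`
(a sum of two Eisenstein norms). -/
theorem sum_two_eisenstein_norms (m : ℕ) (hm : 0 < m) :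
    ∃ x y z u : ℤ, (m : ℤ) = x ^ 2 - x * y + y ^ 2 + z ^ 2 - z * u + u ^ 2 := by
  have h := eis_list m.primeFactorsList (fun q hq => Nat.prime_of_mem_primeFactorsList hq)
  rw [Nat.prod_primeFactorsList hm.ne'] at h
  exact h
end

section
/- Every positive integer m can be written in the form m = x² + 3y² + z² + 3u² with x, y, z, u integers. -/
/-!
In `ℍ[ℤ,-1,1,-1]` we have `i² = i - 1` and `j² = -1`, so `ℤ[i]` is the ring of Eisenstein
integers and the reduced norm of `a + b i + c j + d k` is `(a² + ab + b²) + (c² + cd + d²)`.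
The reduced norm is multiplicative, so it suffices to represent primes, which is done by Lagrange's
descent: an odd prime `p` divides `a² + a + 1 + b²` for some small `a, b`, and a representation of
`m p` with `1 < m < p` can be replaced by one of `k p` with `0 < k < m`. Finally, every value of
`a² + ab + b²` is also a value of `x² + 3y²`.
-/

open scoped Quaternion

namespace QuaternionAlgebra

section CommRing

variable {R : Type*} [CommRing R] {c₁ c₂ c₃ : R}

def normSq (a : ℍ[R,c₁,c₂,c₃]) : R := (a * star a).re

theorem coe_normSq (a : ℍ[R,c₁,c₂,c₃]) : ((normSq a : R) : ℍ[R,c₁,c₂,c₃]) = a * star a :=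
  (mul_star_eq_coe a).symm

theorem normSq_mul (a b : ℍ[R,c₁,c₂,c₃]) : normSq (a * b) = normSq a * normSq b := by
  apply coe_injective (c₁ := c₁) (c₂ := c₂) (c₃ := c₃)
  rw [coe_normSq, star_mul, mul_assoc, ← mul_assoc b, ← coe_normSq, ← mul_assoc, ← coe_commutes,
    mul_assoc, ← coe_normSq, ← coe_mul, mul_comm]

theorem normSq_smul (r : R) (a : ℍ[R,c₁,c₂,c₃]) : normSq (r • a) = r ^ 2 * normSq a := by
  simp only [normSq, star_smul, smul_mul_smul_comm, re_smul, smul_eq_mul, sq]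

theorem normSq_def' (a : ℍ[R,-1,1,-1]) :
    normSq a = (a.re ^ 2 + a.re * a.imI + a.imI ^ 2) + (a.imJ ^ 2 + a.imJ * a.imK + a.imK ^ 2) := by
  simp only [normSq, re_mul, re_star, imI_star, imJ_star, imK_star, one_mul, mul_one, neg_mul,
    mul_neg, neg_neg, sub_neg_eq_add]
  ring

end CommRing

section Ordered

variable {R : Type*} [CommRing R] [LinearOrder R] [IsStrictOrderedRing R]

theorem normSq_nonneg (a : ℍ[R,-1,1,-1]) : 0 ≤ normSq a := by
  rw [normSq_def']
  nlinarith [sq_nonneg (2 * a.re + a.imI), sq_nonneg a.imI, sq_nonneg (2 * a.imJ + a.imK),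
    sq_nonneg a.imK]

theorem normSq_eq_zero {a : ℍ[R,-1,1,-1]} : normSq a = 0 ↔ a = 0 := by
  refine ⟨fun h => ?_, fun h => by simp [h, normSq]⟩
  rw [normSq_def'] at h
  obtain ⟨h₁, h₂, h₃, h₄⟩ : (2 * a.re + a.imI) ^ 2 = 0 ∧ a.imI ^ 2 = 0 ∧
      (2 * a.imJ + a.imK) ^ 2 = 0 ∧ a.imK ^ 2 = 0 := by
    refine ⟨?_, ?_, ?_, ?_⟩ <;>
      nlinarith [sq_nonneg (2 * a.re + a.imI), sq_nonneg a.imI, sq_nonneg (2 * a.imJ + a.imK),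
        sq_nonneg a.imK]
  simp only [pow_eq_zero_iff two_ne_zero] at h₁ h₂ h₃ h₄
  ext <;> simp <;> linarith

end Ordered

end QuaternionAlgebra

open QuaternionAlgebra

theorem exists_shift_sq_add_mul_add_sq_le {m : ℤ} (hm : 0 < m) (z₁ z₂ : ℤ) :
    ∃ s₁ s₂ : ℤ, 16 * ((z₁ + m * s₁) ^ 2 + (z₁ + m * s₁) * (z₂ + m * s₂) + (z₂ + m * s₂) ^ 2)
      ≤ 7 * m ^ 2 := by
  have h2m : 0 < 2 * m := by positivity
  obtain ⟨s₂, ⟨hl₂, hu₂⟩, -⟩ := existsUnique_add_zsmul_mem_Ico h2m (2 * z₂) (-m)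
  obtain ⟨s₁, ⟨hl₁, hu₁⟩, -⟩ :=
    existsUnique_add_zsmul_mem_Ico h2m (2 * z₁ + (z₂ + m * s₂)) (-m)
  refine ⟨s₁, s₂, ?_⟩
  simp only [smul_eq_mul] at hl₁ hu₁ hl₂ hu₂
  -- `4 (x² + xy + y²) = (2x + y)² + 3y²`, where `x = z₁ + m s₁`, `y = z₂ + m s₂` satisfy
  -- `|2x + y| ≤ m` and `|2y| ≤ m`
  nlinarith

theorem exists_normSq_add_smul_le {m : ℤ} (hm : 0 < m) (a : ℍ[ℤ,-1,1,-1]) :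
    ∃ s : ℍ[ℤ,-1,1,-1], 8 * normSq (a + m • s) ≤ 7 * m ^ 2 := by
  obtain ⟨s₁, s₂, h₁₂⟩ := exists_shift_sq_add_mul_add_sq_le hm a.re a.imI
  obtain ⟨s₃, s₄, h₃₄⟩ := exists_shift_sq_add_mul_add_sq_le hm a.imJ a.imK
  refine ⟨⟨s₁, s₂, s₃, s₄⟩, ?_⟩
  rw [normSq_def']
  simp only [re_add, imI_add, imJ_add, imK_add, re_smul, imI_smul, imJ_smul, imK_smul,
    smul_eq_mul]
  linarith

theorem exists_normSq_eq_mul_lt {m n : ℤ} (hm : 1 < m) (hmn : IsCoprime m n)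
    {v : ℍ[ℤ,-1,1,-1]} (hv : normSq v = m * n) :
    ∃ k, 0 < k ∧ k < m ∧ ∃ w : ℍ[ℤ,-1,1,-1], normSq w = k * n := by
  have hm0 : 0 < m := by omega
  obtain ⟨s, hs⟩ := exists_normSq_add_smul_le hm0 (star v)
  set r := star v + m • s
  -- `r ≡ star v` mod `m`, so `v * r ≡ v * star v = m n ≡ 0` mod `m`
  have hvr : v * r = m • ((n : ℍ[ℤ,-1,1,-1]) + v * s) := by
    rw [mul_add, ← coe_normSq, hv, mul_smul_comm, ← coe_intCast, Int.cast_id, smul_add, smul_coe]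
  set w := (n : ℍ[ℤ,-1,1,-1]) + v * s
  have hrw : n * normSq r = m * normSq w := by
    have := congrArg normSq hvr
    rw [normSq_mul, normSq_smul, hv] at this
    exact mul_left_cancel₀ hm0.ne' (by linear_combination this)
  obtain ⟨k, hk⟩ : m ∣ normSq r := hmn.dvd_of_dvd_mul_left ⟨normSq w, by linear_combination hrw⟩
  refine ⟨k, ?_, ?_, w, ?_⟩
  · refine lt_of_le_of_ne (by nlinarith [normSq_nonneg r]) fun hk0 => ?_
    have hr : r = 0 := normSq_eq_zero.mp (by rw [hk, ← hk0, mul_zero])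
    have hv' : v = m • -star s := by
      rw [smul_neg, ← QuaternionAlgebra.star_smul, ← star_neg, ← eq_neg_of_add_eq_zero_left hr,
        star_star]
    have hdvd : m ∣ n := ⟨normSq (-star s), mul_left_cancel₀ hm0.ne' <| by
      rw [← hv, hv', normSq_smul]; ring⟩
    obtain h | h := Int.isUnit_iff.mp (hmn.isUnit_of_dvd hdvd) <;> omega
  · nlinarith
  · exact mul_left_cancel₀ hm0.ne' (by linear_combination -hrw + n * hk)

theorem exists_normSq_eq_prime_of_mul {p m : ℕ} (hp : p.Prime) (hm : 0 < m) (hmp : m < p)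
    (hv : ∃ v : ℍ[ℤ,-1,1,-1], normSq v = m * p) : ∃ w : ℍ[ℤ,-1,1,-1], normSq w = p := by
  induction m using Nat.strong_induction_on with
  | _ m ih =>
  obtain ⟨v, hv⟩ := hv
  obtain rfl | hm1 := (Nat.one_le_iff_ne_zero.mpr hm.ne').eq_or_lt
  · exact ⟨v, by simpa using hv⟩
  have hcop : IsCoprime (m : ℤ) p := Nat.isCoprime_iff_coprime.mpr <|
    Nat.coprime_comm.mp <| hp.coprime_iff_not_dvd.mpr <| Nat.not_dvd_of_pos_of_lt hm hmp
  obtain ⟨k, hk0, hkm, hw⟩ := exists_normSq_eq_mul_lt (by exact_mod_cast hm1) hcop hv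
  lift k to ℕ using hk0.le
  exact ih k (by omega) (by omega) (by omega) hw

theorem exists_normSq_eq_mul_prime_of_lt {p : ℕ} (hp : p.Prime) (hp2 : p ≠ 2) :
    ∃ m : ℕ, 0 < m ∧ m < p ∧ ∃ v : ℍ[ℤ,-1,1,-1], normSq v = m * p := by
  have := Fact.mk hp
  obtain ⟨a, b, hab⟩ := FiniteField.exists_root_sum_quadratic (R := ZMod p)
    (f := .X ^ 2 + .X + 1) (g := .X ^ 2) (by compute_degree!) (Polynomial.degree_X_pow 2)
    (by rw [ZMod.card]; exact hp.mod_two_eq_one_iff_ne_two.mpr hp2)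
  set A := a.valMinAbs
  set B := b.valMinAbs
  obtain ⟨m, hm⟩ : (p : ℤ) ∣ A ^ 2 + A + 1 + B ^ 2 := by
    rw [← ZMod.intCast_zmod_eq_zero_iff_dvd]
    push_cast
    rw [ZMod.coe_valMinAbs, ZMod.coe_valMinAbs]
    simpa using hab
  have hA : 2 * |A| ≤ p := by
    have := a.natAbs_valMinAbs_le
    rw [Int.abs_eq_natAbs]
    omega
  have hB : 2 * |B| ≤ p := by
    have := b.natAbs_valMinAbs_le
    rw [Int.abs_eq_natAbs]
    omega
  have hp3 : (3 : ℤ) ≤ p := by have := hp.two_le; omega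
  have hm0 : 0 < m := by nlinarith [sq_nonneg (2 * A + 1), sq_nonneg B]
  have hmp : m < p := by nlinarith [sq_abs A, sq_abs B, abs_nonneg A, abs_nonneg B, le_abs_self A]
  lift m to ℕ using hm0.le
  exact ⟨m, by omega, by omega, ⟨A, 1, B, 0⟩, by rw [normSq_def']; linear_combination hm⟩

theorem exists_normSq_eq_prime {p : ℕ} (hp : p.Prime) : ∃ w : ℍ[ℤ,-1,1,-1], normSq w = p := by
  obtain rfl | hp2 := eq_or_ne p 2
  · exact ⟨⟨1, 0, 1, 0⟩, by rw [normSq_def']; norm_num⟩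
  obtain ⟨m, hm, hmp, hv⟩ := exists_normSq_eq_mul_prime_of_lt hp hp2
  exact exists_normSq_eq_prime_of_mul hp hm hmp hv

theorem exists_normSq_eq_natCast (n : ℕ) : ∃ a : ℍ[ℤ,-1,1,-1], normSq a = n := by
  induction n using Nat.recOnMul with
  | zero => exact ⟨0, by simp [normSq]⟩
  | one => exact ⟨1, by simp [normSq]⟩
  | prime p hp => exact exists_normSq_eq_prime hp
  | mul a b ha hb =>
    obtain ⟨x, hx⟩ := ha
    obtain ⟨y, hy⟩ := hb
    exact ⟨x * y, by rw [normSq_mul, hx, hy, Nat.cast_mul]⟩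

theorem exists_sq_add_three_mul_sq_eq (a b : ℤ) :
    ∃ x y : ℤ, a ^ 2 + a * b + b ^ 2 = x ^ 2 + 3 * y ^ 2 := by
  rcases Int.even_or_odd b with ⟨t, rfl⟩ | ⟨t, rfl⟩
  · exact ⟨a + t, t, by ring⟩
  rcases Int.even_or_odd a with ⟨s, rfl⟩ | ⟨s, rfl⟩
  · exact ⟨2 * t + 1 + s, s, by ring⟩
  · exact ⟨s - t, s + t + 1, by ring⟩

theorem sum_x2_3y2_z2_3u2_general (m : ℕ) :
    ∃ x y z u : ℤ, (m : ℤ) = x ^ 2 + 3 * y ^ 2 + z ^ 2 + 3 * u ^ 2 := by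
  obtain ⟨a, ha⟩ := exists_normSq_eq_natCast m
  obtain ⟨x, y, hxy⟩ := exists_sq_add_three_mul_sq_eq a.re a.imI
  obtain ⟨z, u, hzu⟩ := exists_sq_add_three_mul_sq_eq a.imJ a.imK
  exact ⟨x, y, z, u, by rw [← ha, normSq_def', hxy, hzu]; ring⟩

/-- Every positive integer is of the form `x² + 3y² + z² + 3u²`. -/
theorem sum_x2_3y2_z2_3u2 (m : ℕ) (hm : 0 < m) :
    ∃ x y z u : ℤ, (m : ℤ) = x ^ 2 + 3 * y ^ 2 + z ^ 2 + 3 * u ^ 2 :=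
  sum_x2_3y2_z2_3u2_general m
end

section
/- Every integer n (positive, zero, or negative) can be written in the form n = x² − 3y² + z² − 3u² with x, y, z, u integers. -/
/-- mod 3: if 3 divides a²+b² then 3 divides both. -/
private lemma sq3_mod3 (a b : ℤ) (h : (3:ℤ) ∣ a^2 + b^2) : (3:ℤ) ∣ a ∧ (3:ℤ) ∣ b := by
  have hd : ∀ x y : ZMod 3, x^2 + y^2 = 0 → x = 0 ∧ y = 0 := by decide
  have h0 : ((a^2 + b^2 : ℤ) : ZMod 3) = 0 := by
    rw [ZMod.intCast_zmod_eq_zero_iff_dvd]; exact_mod_cast h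
  push_cast at h0
  obtain ⟨h1, h2⟩ := hd _ _ h0
  exact ⟨(ZMod.intCast_zmod_eq_zero_iff_dvd a 3).mp h1,
         (ZMod.intCast_zmod_eq_zero_iff_dvd b 3).mp h2⟩

/-- The form x²+y²-3z²-3u² is anisotropic. -/
private lemma aniso_aux : ∀ n : ℕ, ∀ a b c d : ℤ,
    a.natAbs + b.natAbs + c.natAbs + d.natAbs = n →
    a^2 + b^2 = 3*(c^2 + d^2) → a = 0 ∧ b = 0 ∧ c = 0 ∧ d = 0 := by
  intro n
  induction n using Nat.strong_induction_on with
  | _ n ih =>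
    intro a b c d hm heq
    by_cases hab : a = 0 ∧ b = 0
    · obtain ⟨rfl, rfl⟩ := hab
      have hc : c = 0 ∧ d = 0 := by
        constructor <;> nlinarith [sq_nonneg c, sq_nonneg d]
      exact ⟨rfl, rfl, hc.1, hc.2⟩
    · have h3 : (3:ℤ) ∣ a^2 + b^2 := ⟨c^2 + d^2, by linarith⟩
      obtain ⟨ha, hb⟩ := sq3_mod3 a b h3
      obtain ⟨a', rfl⟩ := ha
      obtain ⟨b', rfl⟩ := hb
      have heq' : c^2 + d^2 = 3*(a'^2 + b'^2) := by nlinarith [heq]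
      have hlt : c.natAbs + d.natAbs + a'.natAbs + b'.natAbs < n := by
        have h1 : (3*a').natAbs = 3 * a'.natAbs := by
          rw [Int.natAbs_mul]; rfl
        have h2 : (3*b').natAbs = 3 * b'.natAbs := by
          rw [Int.natAbs_mul]; rfl
        have hne : a'.natAbs ≠ 0 ∨ b'.natAbs ≠ 0 := by
          rcases Decidable.em (a' = 0) with h | h
          · right
            intro hb0
            exact hab ⟨by simp [h], by simp [Int.natAbs_eq_zero.mp hb0]⟩
          · left; simpa [Int.natAbs_eq_zero] using h
        omega
      obtain ⟨hc0, hd0, ha0, hb0⟩ := ih _ hlt c d a' b' rfl heq'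
      exact ⟨by rw [ha0]; ring, by rw [hb0]; ring, hc0, hd0⟩

private lemma aniso {a b c d : ℤ} (heq : a^2 + b^2 - 3*c^2 - 3*d^2 = 0) :
    a = 0 ∧ b = 0 ∧ c = 0 ∧ d = 0 :=
  aniso_aux _ a b c d rfl (by linarith)

private lemma even_sq_sub (t : ℤ) : Even (t^2 - t) := by
  obtain ⟨r, hr⟩ := Int.even_mul_succ_self t
  exact ⟨r - t, by linear_combination hr⟩

/-- halving: if the form takes an even value 2k, it takes value k or -k. -/
private lemma halve (x y z u k : ℤ) (h : x^2 + y^2 - 3*z^2 - 3*u^2 = 2*k) :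
    ∃ a b c d : ℤ, a^2 + b^2 - 3*c^2 - 3*d^2 = k ∨ a^2 + b^2 - 3*c^2 - 3*d^2 = -k := by
  have hsum : (2:ℤ) ∣ (x + y + z + u) := by
    obtain ⟨r1, h1⟩ := even_sq_sub x
    obtain ⟨r2, h2⟩ := even_sq_sub y
    obtain ⟨r3, h3⟩ := even_sq_sub z
    obtain ⟨r4, h4⟩ := even_sq_sub u
    exact ⟨k - r1 - r2 + 3*r3 + 3*r4 + 2*z + 2*u,
      by linear_combination h - h1 - h2 + 3*h3 + 3*h4⟩
  by_cases c1 : (2:ℤ) ∣ (x - y) ∧ (2:ℤ) ∣ (z - u)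
  · obtain ⟨hc1, hc2⟩ := c1
    obtain ⟨s, hs⟩ : ∃ s : ℤ, x = s + (x - y)/2 := ⟨(x+y)/2, by omega⟩
    obtain ⟨t, ht⟩ : ∃ t : ℤ, x - y = 2*t := ⟨(x-y)/2, by omega⟩
    obtain ⟨v, hv⟩ : ∃ v : ℤ, z = v + (z - u)/2 := ⟨(z+u)/2, by omega⟩
    obtain ⟨w, hw⟩ : ∃ w : ℤ, z - u = 2*w := ⟨(z-u)/2, by omega⟩
    have hx : x = s + t := by omega
    have hy : y = s - t := by omega
    have hz : z = v + w := by omega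
    have hu : u = v - w := by omega
    subst hx hy hz hu
    refine ⟨s, t, v, w, Or.inl ?_⟩
    have h2 : 2*(s^2 + t^2 - 3*v^2 - 3*w^2) = 2*k := by linear_combination h
    linarith
  · by_cases c2 : (2:ℤ) ∣ (x - z) ∧ (2:ℤ) ∣ (y - u)
    · obtain ⟨hc1, hc2⟩ := c2
      obtain ⟨α, hα⟩ : ∃ α : ℤ, x - z = 2*α := ⟨(x-z)/2, by omega⟩
      obtain ⟨β, hβ⟩ : ∃ β : ℤ, y - u = 2*β := ⟨(y-u)/2, by omega⟩
      have hx : x = z + 2*α := by omega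
      have hy : y = u + 2*β := by omega
      subst hx hy
      refine ⟨u - β, 2*z + α, β, z + α, Or.inr ?_⟩
      have h2 : 2*((u - β)^2 + (2*z + α)^2 - 3*β^2 - 3*(z + α)^2) = 2*(-k) := by
        linear_combination -h
      linarith
    · have hc1 : (2:ℤ) ∣ (x - u) := by omega
      have hc2 : (2:ℤ) ∣ (y - z) := by omega
      obtain ⟨γ, hγ⟩ : ∃ γ : ℤ, x - u = 2*γ := ⟨(x-u)/2, by omega⟩
      obtain ⟨δ, hδ⟩ : ∃ δ : ℤ, y - z = 2*δ := ⟨(y-z)/2, by omega⟩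
      have hx : x = u + 2*γ := by omega
      have hy : y = z + 2*δ := by omega
      subst hx hy
      refine ⟨z - δ, γ - u, γ, δ, Or.inr ?_⟩
      have h2 : 2*((z - δ)^2 + (γ - u)^2 - 3*γ^2 - 3*δ^2) = 2*(-k) := by
        linear_combination -h
      linarith

private lemma balanced (m t : ℤ) (hm : 0 < m) (hmo : m % 2 = 1) :
    ∃ r q : ℤ, t = r + m*q ∧ 2*r ≤ m - 1 ∧ 1 - m ≤ 2*r := by
  have h1 : 0 ≤ t % m := Int.emod_nonneg t (by omega)
  have h2 : t % m < m := Int.emod_lt_of_pos t hm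
  have h3 : m * (t / m) + t % m = t := Int.mul_ediv_add_emod t m
  by_cases hc : 2*(t % m) ≤ m - 1
  · exact ⟨t % m, t / m, by linear_combination -h3, hc, by omega⟩
  · refine ⟨t % m - m, t / m + 1, by linear_combination -h3, by omega, by omega⟩

private lemma keyL1 (m r S : ℤ) (hm : 0 < m) (hr : 0 ≤ r)
    (k1 : 2*S ≤ r^2 + (r - m)^2) : -(m^2) < r^2 - S := by
  nlinarith [mul_nonneg hm.le hr, mul_pos hm hm]

private lemma keyU1 (m r S : ℤ) (hm3 : 3 ≤ m) (h4r : 4*r^2 ≤ (m-1)^2)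
    (hS : -((m-1)^2) ≤ 4*S) : r^2 - S < m^2 := by nlinarith

private lemma keyU2 (m r S : ℤ) (hm : 0 < m) (hr : 0 ≤ r)
    (k1' : r^2 + (r - m)^2 < 2*S) : (r - m)^2 - S < m^2 := by
  nlinarith [mul_nonneg hm.le hr, mul_pos hm hm]

private lemma keyL2 (m r S : ℤ) (hm : 0 < m) (hr : 0 ≤ r) (h2r : 2*r ≤ m - 1)
    (k2 : 2*S ≤ 2*r^2 + 2*m^2) : -(m^2) < (r - m)^2 - S := by
  nlinarith [mul_nonneg hm.le (by linarith : (0:ℤ) ≤ m - 1 - 2*r), mul_pos hm hm]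

private lemma keyU3 (m r S : ℤ) (hm : 0 < m) (hr : 0 ≤ r) (h2r : 2*r ≤ m - 1)
    (k2' : 2*r^2 + 2*m^2 < 2*S) : (r + m)^2 - S < m^2 := by
  nlinarith [mul_nonneg hm.le (by linarith : (0:ℤ) ≤ m - 1 - 2*r), mul_pos hm hm]

private lemma keyL3 (m r S : ℤ) (hm3 : 3 ≤ m) (hr : 0 ≤ r)
    (hS2 : 2*S ≤ 3*(m-1)^2) : -(m^2) < (r + m)^2 - S := by
  nlinarith [mul_nonneg (by omega : (0:ℤ) ≤ m) hr, sq_nonneg r]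

set_option maxHeartbeats 1000000 in
private lemma euclid (m x y z u : ℤ) (hm3 : 3 ≤ m) (hmo : m % 2 = 1) :
    ∃ a b c d : ℤ, (m ∣ a - x) ∧ (m ∣ b - y) ∧ (m ∣ c - z) ∧ (m ∣ d - u) ∧
      -(m^2) < a^2 + b^2 - 3*c^2 - 3*d^2 ∧ a^2 + b^2 - 3*c^2 - 3*d^2 < m^2 := by
  have hm : 0 < m := by omega
  obtain ⟨ra, qa, hxa, ha1, ha2⟩ := balanced m x hm hmo
  obtain ⟨rb, qb, hxb, hb1, hb2⟩ := balanced m y hm hmo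
  obtain ⟨rc, qc, hxc, hc1, hc2⟩ := balanced m z hm hmo
  obtain ⟨rd, qd, hxd, hd1, hd2⟩ := balanced m u hm hmo
  have dB : m ∣ rb - y := ⟨-qb, by linarith⟩
  have dC : m ∣ rc - z := ⟨-qc, by linarith⟩
  have dD : m ∣ rd - u := ⟨-qd, by linarith⟩
  have sqb : 4*rb^2 ≤ (m-1)^2 := by nlinarith [sq_nonneg (m - 1 - 2*rb), sq_nonneg (m - 1 + 2*rb)]
  have sqc : 4*rc^2 ≤ (m-1)^2 := by nlinarith [sq_nonneg (m - 1 - 2*rc), sq_nonneg (m - 1 + 2*rc)]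
  have sqd : 4*rd^2 ≤ (m-1)^2 := by nlinarith [sq_nonneg (m - 1 - 2*rd), sq_nonneg (m - 1 + 2*rd)]
  have hS : -((m-1)^2) ≤ 4*(3*rc^2 + 3*rd^2 - rb^2) := by nlinarith [sq_nonneg rc, sq_nonneg rd]
  have hS2 : 2*(3*rc^2 + 3*rd^2 - rb^2) ≤ 3*(m-1)^2 := by nlinarith [sq_nonneg rb]
  rcases le_or_gt 0 ra with hra | hra
  · have sqa : 4*ra^2 ≤ (m-1)^2 := by nlinarith [sq_nonneg (m - 1 - 2*ra), sq_nonneg (m - 1 + 2*ra)]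
    by_cases k1 : 2*(3*rc^2 + 3*rd^2 - rb^2) ≤ ra^2 + (ra - m)^2
    · have hL := keyL1 m ra _ hm hra k1
      have hU := keyU1 m ra _ hm3 sqa hS
      exact ⟨ra, rb, rc, rd, ⟨-qa, by linarith⟩, dB, dC, dD, by linarith, by linarith⟩
    · by_cases k2 : 2*(3*rc^2 + 3*rd^2 - rb^2) ≤ 2*ra^2 + 2*m^2
      · have hU := keyU2 m ra _ hm hra (not_le.mp k1)
        have hL := keyL2 m ra _ hm hra ha1 k2
        exact ⟨ra - m, rb, rc, rd, ⟨-qa - 1, by linarith⟩, dB, dC, dD, by linarith, by linarith⟩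
      · have hU := keyU3 m ra _ hm hra ha1 (not_le.mp k2)
        have hL := keyL3 m ra _ hm3 hra hS2
        exact ⟨ra + m, rb, rc, rd, ⟨-qa + 1, by linarith⟩, dB, dC, dD, by linarith, by linarith⟩
  · have hra' : 0 ≤ -ra := by linarith
    have ha1' : 2*(-ra) ≤ m - 1 := by linarith
    have sqa : 4*(-ra)^2 ≤ (m-1)^2 := by nlinarith [sq_nonneg (m - 1 - 2*ra), sq_nonneg (m - 1 + 2*ra)]
    by_cases k1 : 2*(3*rc^2 + 3*rd^2 - rb^2) ≤ (-ra)^2 + ((-ra) - m)^2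
    · have hL := keyL1 m (-ra) _ hm hra' k1
      have hU := keyU1 m (-ra) _ hm3 sqa hS
      have e1 : (-ra)^2 = ra^2 := by ring
      exact ⟨ra, rb, rc, rd, ⟨-qa, by linarith⟩, dB, dC, dD,
        by rw [e1] at hL; linarith, by rw [e1] at hU; linarith⟩
    · by_cases k2 : 2*(3*rc^2 + 3*rd^2 - rb^2) ≤ 2*(-ra)^2 + 2*m^2
      · have hU := keyU2 m (-ra) _ hm hra' (not_le.mp k1)
        have hL := keyL2 m (-ra) _ hm hra' ha1' k2
        have e1 : ((-ra) - m)^2 = (ra + m)^2 := by ring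
        exact ⟨ra + m, rb, rc, rd, ⟨-qa + 1, by linarith⟩, dB, dC, dD,
          by rw [e1] at hL; linarith, by rw [e1] at hU; linarith⟩
      · have hU := keyU3 m (-ra) _ hm hra' ha1' (not_le.mp k2)
        have hL := keyL3 m (-ra) _ hm3 hra' hS2
        have e1 : ((-ra) + m)^2 = (ra - m)^2 := by ring
        exact ⟨ra - m, rb, rc, rd, ⟨-qa - 1, by linarith⟩, dB, dC, dD,
          by rw [e1] at hL; linarith, by rw [e1] at hU; linarith⟩

set_option maxHeartbeats 1600000 in
private lemma descend (p : ℕ) (hp : p.Prime) :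
    ∀ m : ℕ, 0 < m → m < p →
    (∃ x y z u e : ℤ, (e = 1 ∨ e = -1) ∧ x^2 + y^2 - 3*z^2 - 3*u^2 = e*((m:ℤ)*(p:ℤ))) →
    ∃ x y z u : ℤ, x^2 + y^2 - 3*z^2 - 3*u^2 = (p:ℤ) ∨ x^2 + y^2 - 3*z^2 - 3*u^2 = -(p:ℤ) := by
  intro m
  induction m using Nat.strong_induction_on with
  | _ m ih =>
    intro hm0 hmp hrep
    obtain ⟨x, y, z, u, e, he, hs⟩ := hrep
    rcases eq_or_ne m 1 with rfl | hm1
    · refine ⟨x, y, z, u, ?_⟩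
      rcases he with rfl | rfl
      · left; rw [hs]; push_cast; ring
      · right; rw [hs]; push_cast; ring
    rcases Nat.even_or_odd m with hme | hmo
    · -- m even : halve
      obtain ⟨m', rfl⟩ := hme
      have h2 : x^2 + y^2 - 3*z^2 - 3*u^2 = 2*(e*((m':ℤ)*(p:ℤ))) := by
        rw [hs]; push_cast; ring
      obtain ⟨A, B, C, D, hh⟩ := halve x y z u _ h2
      apply ih m' (by omega) (by omega) (by omega)
      rcases hh with h | h
      · exact ⟨A, B, C, D, e, he, h⟩
      · refine ⟨A, B, C, D, -e, ?_, by rw [h]; ring⟩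
        rcases he with rfl | rfl
        · right; rfl
        · left; norm_num
    · -- m odd, m ≥ 3
      have hmodd : m % 2 = 1 := Nat.odd_iff.mp hmo
      have hm3 : (3:ℤ) ≤ (m:ℤ) := by omega
      have hmo' : (m:ℤ) % 2 = 1 := by omega
      have hmne : ((m:ℕ):ℤ) ≠ 0 := by
        simp only [ne_eq, Nat.cast_eq_zero]; omega
      obtain ⟨a, b, c, d, dA, dB, dC, dD, hL, hU⟩ := euclid (m:ℤ) x y z u hm3 hmo'
      obtain ⟨t1, ht1⟩ := dA
      obtain ⟨t2, ht2⟩ := dB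
      obtain ⟨t3, ht3⟩ := dC
      obtain ⟨t4, ht4⟩ := dD
      have ha : a = x + (m:ℤ)*t1 := by linarith
      have hb : b = y + (m:ℤ)*t2 := by linarith
      have hc : c = z + (m:ℤ)*t3 := by linarith
      have hd : d = u + (m:ℤ)*t4 := by linarith
      subst ha hb hc hd
      by_cases hW0 : (x + (m:ℤ)*t1)^2 + (y + (m:ℤ)*t2)^2 - 3*(z + (m:ℤ)*t3)^2 - 3*(u + (m:ℤ)*t4)^2 = 0
      · -- anisotropic case: impossible
        exfalso
        obtain ⟨hA0, hB0, hC0, hD0⟩ := aniso hW0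
        have hx : x = -((m:ℤ)*t1) := by linarith
        have hy : y = -((m:ℤ)*t2) := by linarith
        have hz : z = -((m:ℤ)*t3) := by linarith
        have hu : u = -((m:ℤ)*t4) := by linarith
        have hcan : (m:ℤ) * ((m:ℤ)*(t1^2 + t2^2 - 3*t3^2 - 3*t4^2)) = (m:ℤ) * (e*(p:ℤ)) := by
          rw [hx, hy, hz, hu] at hs
          linear_combination hs
        have h' : (m:ℤ)*(t1^2 + t2^2 - 3*t3^2 - 3*t4^2) = e*(p:ℤ) :=
          mul_left_cancel₀ hmne hcan
        have hdvd : (m:ℤ) ∣ (p:ℤ) := by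
          rcases he with rfl | rfl
          · exact ⟨t1^2 + t2^2 - 3*t3^2 - 3*t4^2, by linarith⟩
          · exact ⟨-(t1^2 + t2^2 - 3*t3^2 - 3*t4^2), by linarith⟩
        have := hp.eq_one_or_self_of_dvd m (Int.natCast_dvd_natCast.mp hdvd)
        omega
      · -- genuine descent step
        have big : (m:ℤ)^2 * ((e*(p:ℤ) + (x*t1 + y*t2 - 3*z*t3 - 3*u*t4))^2
              + (-x*t2 + y*t1 + 3*z*t4 - 3*u*t3)^2
              - 3*(-x*t3 + z*t1 + y*t4 - u*t2)^2
              - 3*(-x*t4 + u*t1 - y*t3 + z*t2)^2)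
            = e*((m:ℤ)*(p:ℤ)) * ((x + (m:ℤ)*t1)^2 + (y + (m:ℤ)*t2)^2
              - 3*(z + (m:ℤ)*t3)^2 - 3*(u + (m:ℤ)*t4)^2) := by
          linear_combination (((x + (m:ℤ)*t1)^2 + (y + (m:ℤ)*t2)^2
              - 3*(z + (m:ℤ)*t3)^2 - 3*(u + (m:ℤ)*t4)^2)
            - e*(m:ℤ)*(p:ℤ) - (x^2 + y^2 - 3*z^2 - 3*u^2)
            - 2*(m:ℤ)*(x*t1 + y*t2 - 3*z*t3 - 3*u*t4)) * hs
        have can1 : (m:ℤ) * ((e*(p:ℤ) + (x*t1 + y*t2 - 3*z*t3 - 3*u*t4))^2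
              + (-x*t2 + y*t1 + 3*z*t4 - 3*u*t3)^2
              - 3*(-x*t3 + z*t1 + y*t4 - u*t2)^2
              - 3*(-x*t4 + u*t1 - y*t3 + z*t2)^2)
            = e*(p:ℤ) * ((x + (m:ℤ)*t1)^2 + (y + (m:ℤ)*t2)^2
              - 3*(z + (m:ℤ)*t3)^2 - 3*(u + (m:ℤ)*t4)^2) := by
          apply mul_left_cancel₀ hmne
          linear_combination big
        have hpW : (m:ℤ) ∣ (p:ℤ) * ((x + (m:ℤ)*t1)^2 + (y + (m:ℤ)*t2)^2
              - 3*(z + (m:ℤ)*t3)^2 - 3*(u + (m:ℤ)*t4)^2) := by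
          rcases he with rfl | rfl
          · exact ⟨(1*(p:ℤ) + (x*t1 + y*t2 - 3*z*t3 - 3*u*t4))^2
              + (-x*t2 + y*t1 + 3*z*t4 - 3*u*t3)^2
              - 3*(-x*t3 + z*t1 + y*t4 - u*t2)^2
              - 3*(-x*t4 + u*t1 - y*t3 + z*t2)^2, by linear_combination -can1⟩
          · exact ⟨-((-1*(p:ℤ) + (x*t1 + y*t2 - 3*z*t3 - 3*u*t4))^2
              + (-x*t2 + y*t1 + 3*z*t4 - 3*u*t3)^2
              - 3*(-x*t3 + z*t1 + y*t4 - u*t2)^2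
              - 3*(-x*t4 + u*t1 - y*t3 + z*t2)^2), by linear_combination can1⟩
        have hndvd : ¬ p ∣ m := fun hd => by
          have := Nat.le_of_dvd hm0 hd; omega
        have hcop : IsCoprime ((m:ℕ):ℤ) ((p:ℕ):ℤ) :=
          Nat.isCoprime_iff_coprime.mpr ((Nat.Prime.coprime_iff_not_dvd hp).mpr hndvd).symm
        obtain ⟨W', hW'⟩ := hcop.dvd_of_dvd_mul_left hpW
        have can2 : (e*(p:ℤ) + (x*t1 + y*t2 - 3*z*t3 - 3*u*t4))^2
              + (-x*t2 + y*t1 + 3*z*t4 - 3*u*t3)^2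
              - 3*(-x*t3 + z*t1 + y*t4 - u*t2)^2
              - 3*(-x*t4 + u*t1 - y*t3 + z*t2)^2 = e*(p:ℤ)*W' := by
          apply mul_left_cancel₀ hmne
          linear_combination can1 + (e*(p:ℤ))*hW'
        rw [hW'] at hL hU hW0
        have hmpos : (0:ℤ) < (m:ℤ) := by omega
        have hb1 : W' < (m:ℤ) := by nlinarith [hU, hmpos]
        have hb2 : -(m:ℤ) < W' := by nlinarith [hL, hmpos]
        have hWne : W' ≠ 0 := fun h => hW0 (by rw [h, mul_zero])
        have hk : ((W'.natAbs : ℤ) = W') ∨ ((W'.natAbs : ℤ) = -W') := by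
          rcases Int.natAbs_eq W' with h | h
          · left; omega
          · right; omega
        apply ih W'.natAbs ?_ ?_ ?_
        · rcases hk with hk | hk
          · exact ⟨_, _, _, _, e, he, by rw [can2, hk]; ring⟩
          · refine ⟨_, _, _, _, -e, ?_, by rw [can2, hk]; ring⟩
            rcases he with rfl | rfl
            · right; rfl
            · left; norm_num
        · rcases hk with hk | hk <;> omega
        · have := Int.natAbs_pos.mpr hWne; omega
        · rcases hk with hk | hk <;> omega

private lemma no_three (a b : ℤ) : a^2 + b^2 ≠ 3 := by
  intro h
  have ha1 : -2 < a := by nlinarith [sq_nonneg (a+2), sq_nonneg b]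
  have ha2 : a < 2 := by nlinarith [sq_nonneg (a-2), sq_nonneg b]
  have hb1 : -2 < b := by nlinarith [sq_nonneg (b+2), sq_nonneg a]
  have hb2 : b < 2 := by nlinarith [sq_nonneg (b-2), sq_nonneg a]
  interval_cases a <;> interval_cases b <;> norm_num at h

private lemma prime_rep (p : ℕ) (hp : p.Prime) :
    ∃ x y z u : ℤ, x^2 + y^2 - 3*z^2 - 3*u^2 = (p:ℤ) ∨ x^2 + y^2 - 3*z^2 - 3*u^2 = -(p:ℤ) := by
  rcases eq_or_ne p 2 with rfl | hp2
  · exact ⟨1, 1, 0, 0, Or.inl (by norm_num)⟩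
  rcases eq_or_ne p 3 with rfl | hp3
  · exact ⟨3, 0, 1, 1, Or.inl (by norm_num)⟩
  have h2le := hp.two_le
  have hp5 : 5 ≤ p := by
    rcases Nat.lt_or_ge p 5 with h | h
    · interval_cases p
      · omega
      · omega
      · exact absurd hp (by norm_num)
    · exact h
  have hpo : (p:ℤ) % 2 = 1 := by
    have : p % 2 = 1 := Nat.odd_iff.mp (hp.odd_of_ne_two hp2)
    omega
  have hppos : (0:ℤ) < (p:ℤ) := by omega
  haveI : Fact p.Prime := ⟨hp⟩
  obtain ⟨A, B, hAB⟩ := ZMod.sq_add_sq p (3 : ZMod p)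
  have hdvd : (p:ℤ) ∣ ((A.val:ℤ)^2 + (B.val:ℤ)^2 - 3) := by
    rw [← ZMod.intCast_zmod_eq_zero_iff_dvd]
    push_cast
    rw [ZMod.natCast_val, ZMod.natCast_val, ZMod.cast_id, ZMod.cast_id, hAB]
    ring
  obtain ⟨k0, hk0⟩ := hdvd
  obtain ⟨a0, qa, hA0, ha1, ha2⟩ := balanced (p:ℤ) (A.val:ℤ) hppos hpo
  obtain ⟨b0, qb, hB0, hb1, hb2⟩ := balanced (p:ℤ) (B.val:ℤ) hppos hpo
  have hk : a0^2 + b0^2 - 3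
      = (p:ℤ)*(k0 - 2*qa*a0 - (p:ℤ)*qa^2 - 2*qb*b0 - (p:ℤ)*qb^2) := by
    linear_combination hk0 + (-(p:ℤ)*qa - (A.val:ℤ) - a0)*hA0 + (-(p:ℤ)*qb - (B.val:ℤ) - b0)*hB0
  set k : ℤ := k0 - 2*qa*a0 - (p:ℤ)*qa^2 - 2*qb*b0 - (p:ℤ)*qb^2 with hkdef
  have hk1 : 1 ≤ k := by
    rcases lt_trichotomy k 0 with h | h | h
    · exfalso
      have hle : (p:ℤ)*k ≤ (p:ℤ)*(-1) := by
        apply mul_le_mul_of_nonneg_left (by omega) (by omega)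
      nlinarith [sq_nonneg a0, sq_nonneg b0, hk]
    · exfalso
      rw [h, mul_zero] at hk
      exact no_three a0 b0 (by linarith)
    · omega
  have sqa4 : 4*a0^2 ≤ ((p:ℤ)-1)^2 := by
    nlinarith [sq_nonneg ((p:ℤ) - 1 - 2*a0), sq_nonneg ((p:ℤ) - 1 + 2*a0)]
  have sqb4 : 4*b0^2 ≤ ((p:ℤ)-1)^2 := by
    nlinarith [sq_nonneg ((p:ℤ) - 1 - 2*b0), sq_nonneg ((p:ℤ) - 1 + 2*b0)]
  have hkp : k < (p:ℤ) := by
    have hmul : (p:ℤ)*k < (p:ℤ)*(p:ℤ) := by nlinarith [hk, sqa4, sqb4]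
    exact lt_of_mul_lt_mul_left hmul (by omega)
  apply descend p hp k.toNat
  · omega
  · omega
  · refine ⟨a0, b0, 1, 0, 1, Or.inl rfl, ?_⟩
    have hkt : ((k.toNat : ℕ) : ℤ) = k := Int.toNat_of_nonneg (by omega)
    rw [hkt]
    linear_combination hk

private lemma mul_rep {A B : ℤ}
    (hA : ∃ x y z u : ℤ, x^2 + y^2 - 3*z^2 - 3*u^2 = A)
    (hB : ∃ x y z u : ℤ, x^2 + y^2 - 3*z^2 - 3*u^2 = B) :
    ∃ x y z u : ℤ, x^2 + y^2 - 3*z^2 - 3*u^2 = A*B := by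
  obtain ⟨a1, a2, a3, a4, rfl⟩ := hA
  obtain ⟨b1, b2, b3, b4, rfl⟩ := hB
  exact ⟨a1*b1 - a2*b2 + 3*a3*b3 + 3*a4*b4,
         a1*b2 + a2*b1 - 3*a3*b4 + 3*a4*b3,
         a1*b3 + a3*b1 - a2*b4 + a4*b2,
         a1*b4 + a4*b1 + a2*b3 - a3*b2, by ring⟩

private lemma natRep : ∀ n : ℕ, ∃ x y z u : ℤ, x^2 + y^2 - 3*z^2 - 3*u^2 = (n:ℤ) := by
  intro n
  induction n using Nat.strong_induction_on with
  | _ n ih =>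
    rcases eq_or_ne n 0 with rfl | h0
    · exact ⟨0, 0, 0, 0, by norm_num⟩
    rcases eq_or_ne n 1 with rfl | h1
    · exact ⟨1, 0, 0, 0, by norm_num⟩
    obtain ⟨p, pp, hpd⟩ := Nat.exists_prime_and_dvd h1
    obtain ⟨m, rfl⟩ := hpd
    have hm0 : m ≠ 0 := by rintro rfl; simp at h0
    have hmlt : m < p*m := by
      have h2 : 2*m ≤ p*m := Nat.mul_le_mul_right m pp.two_le
      omega
    have R1 := ih m hmlt
    have R2 : ∃ x y z u : ℤ, x^2 + y^2 - 3*z^2 - 3*u^2 = (p:ℤ) := by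
      obtain ⟨x, y, z, u, h⟩ := prime_rep p pp
      rcases h with h | h
      · exact ⟨x, y, z, u, h⟩
      · have hneg : ∃ x y z u : ℤ, x^2 + y^2 - 3*z^2 - 3*u^2 = (-1:ℤ) :=
          ⟨1, 1, 1, 0, by norm_num⟩
        obtain ⟨X, Y, Z, U, hr⟩ := mul_rep hneg ⟨x, y, z, u, h⟩
        exact ⟨X, Y, Z, U, by rw [hr]; ring⟩
    obtain ⟨X, Y, Z, U, hr⟩ := mul_rep R2 R1
    exact ⟨X, Y, Z, U, by rw [hr]; push_cast; ring⟩

/-- Every integer is of the form `x² − 3y² + z² − 3u²` (a sum of two norms from `ℤ[√3]`). -/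
theorem sum_two_z_sqrt3_norms (n : ℤ) :
    ∃ x y z u : ℤ, n = x ^ 2 - 3 * y ^ 2 + z ^ 2 - 3 * u ^ 2 := by
  have key : ∃ X Y Z U : ℤ, X^2 + Y^2 - 3*Z^2 - 3*U^2 = n := by
    rcases le_or_gt 0 n with h | h
    · obtain ⟨X, Y, Z, U, hr⟩ := natRep n.toNat
      exact ⟨X, Y, Z, U, by rw [hr, Int.toNat_of_nonneg h]⟩
    · obtain ⟨X, Y, Z, U, hr⟩ := natRep n.natAbs
      have hneg : ∃ x y z u : ℤ, x^2 + y^2 - 3*z^2 - 3*u^2 = (-1:ℤ) :=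
        ⟨1, 1, 1, 0, by norm_num⟩
      obtain ⟨X', Y', Z', U', hr'⟩ := mul_rep hneg ⟨X, Y, Z, U, hr⟩
      have habs : ((n.natAbs : ℕ) : ℤ) = -n := by omega
      exact ⟨X', Y', Z', U', by rw [hr', habs]; ring⟩
  obtain ⟨X, Y, Z, U, h⟩ := key
  exact ⟨X, Z, Y, U, by linarith [h]⟩
end

section
/- For every positive integer n, the cyclotomic polynomial Φ_{4n} over ℚ is a sum of two squares in ℚ[X]: there exist polynomials x, y ∈ ℚ[X] with Φ_{4n} = x² + y². -/
/-!
For odd `n > 1`, `-ζ` is a primitive `2n`-th root of unity whenever `ζ` is a primitive `n`-th one,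
so `Φ₂ₙ(X) = Φₙ(-X)` and hence `Φₙ(X²) = Φₙ(X) Φₙ(-X)`. Splitting `Φₙ = a(X²) + X b(X²)` into even
and odd parts turns this identity into `Φₙ = a² - X b²`, and substituting `-X²` gives
`Φ₄ₙ = Φₙ(-X²) = a(-X²)² + (X b(-X²))²`. Finally `Φ₈ₙ(X) = Φ₄ₙ(X²)`, so the property passes
from `4n` to `8n`, which reaches every `n = 2ᵏ m` with `m` odd.
-/

open Polynomial

theorem IsPrimitiveRoot.neg_of_odd {R : Type*} [CommRing R] [Nontrivial R] (hR : ringChar R ≠ 2)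
    {ζ : R} {n : ℕ} (hζ : IsPrimitiveRoot ζ n) (hn : Odd n) : IsPrimitiveRoot (-ζ) (2 * n) := by
  convert IsPrimitiveRoot.orderOf (-ζ)
  rw [neg_eq_neg_one_mul, (Commute.all _ _).orderOf_mul_eq_mul_orderOf_of_coprime]
  · simp [hζ.eq_orderOf, orderOf_neg_one, hR]
  · simp [← hζ.eq_orderOf, orderOf_neg_one, hR, hn]

namespace Polynomial

theorem cyclotomic_two_mul_of_odd {n : ℕ} (hn : Odd n) (h1 : n ≠ 1) (R : Type*) [CommRing R] :
    cyclotomic (2 * n) R = (cyclotomic n R).comp (-X) := by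
  suffices hℤ : cyclotomic (2 * n) ℤ = (cyclotomic n ℤ).comp (-X) by
    simpa [map_comp] using congrArg (map (Int.castRingHom R)) hℤ
  have hn2 : 2 < n := by rcases hn with ⟨k, rfl⟩; omega
  have hζ := Complex.isPrimitiveRoot_exp n (by omega)
  have hmonic : ((cyclotomic n ℤ).comp (-X)).Monic := by
    rw [Monic, leadingCoeff_comp (by simp), (cyclotomic.monic n ℤ).leadingCoeff, leadingCoeff_neg,
      leadingCoeff_X, natDegree_cyclotomic, (Nat.totient_even hn2).neg_one_pow, one_mul]
  refine (eq_of_monic_of_dvd_of_natDegree_le (cyclotomic.monic _ ℤ) hmonic ?_ ?_).symm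
  · have hnegζ := hζ.neg_of_odd (by simp) hn
    rw [cyclotomic_eq_minpoly hnegζ (by omega)]
    refine minpoly.isIntegrallyClosed_dvd (hnegζ.isIntegral (by omega)) ?_
    rw [aeval_comp, map_neg, aeval_X, neg_neg, aeval_def, eval₂_eq_eval_map, map_cyclotomic]
    exact hζ.isRoot_cyclotomic (by omega)
  · rw [natDegree_comp, natDegree_neg, natDegree_X, mul_one, natDegree_cyclotomic,
      natDegree_cyclotomic, Nat.totient_two_mul_of_odd hn]

variable {R : Type*} [CommRing R]

theorem exists_eq_expand_two_add_X_mul_expand_two (f : R[X]) :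
    ∃ a b : R[X], f = expand R 2 a + X * expand R 2 b := by
  induction f using Polynomial.induction_on' with
  | add p q hp hq =>
    obtain ⟨a, b, rfl⟩ := hp
    obtain ⟨c, d, rfl⟩ := hq
    exact ⟨a + c, b + d, by rw [map_add, map_add]; ring⟩
  | monomial n r =>
    obtain ⟨k, rfl | rfl⟩ := n.even_or_odd'
    · refine ⟨C r * X ^ k, 0, ?_⟩
      rw [map_zero, mul_zero, add_zero, map_mul, expand_C, map_pow, expand_X, ← pow_mul,
        C_mul_X_pow_eq_monomial]
    · refine ⟨0, C r * X ^ k, ?_⟩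
      rw [map_zero, zero_add, map_mul, expand_C, map_pow, expand_X, ← pow_mul, mul_left_comm,
        ← pow_succ', C_mul_X_pow_eq_monomial]

theorem expand_two_comp_neg_X (p : R[X]) : (expand R 2 p).comp (-X) = expand R 2 p := by
  rw [expand_eq_comp_X_pow, comp_assoc, X_pow_comp, neg_sq]

/-- Writing `f = a(X²) + X b(X²)`, the product `f(X) f(-X)` is `(a² - X b²)(X²)`. -/
theorem exists_eq_sq_sub_X_mul_sq_of_expand_two_eq {f : R[X]}
    (hf : expand R 2 f = f * f.comp (-X)) : ∃ a b : R[X], f = a ^ 2 - X * b ^ 2 := by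
  obtain ⟨a, b, hab⟩ := exists_eq_expand_two_add_X_mul_expand_two f
  refine ⟨a, b, expand_injective two_pos ?_⟩
  rw [hf, map_sub, map_mul, map_pow, map_pow, expand_X]
  nth_rewrite 2 [hab]
  rw [add_comp, mul_comp, X_comp, expand_two_comp_neg_X, expand_two_comp_neg_X, hab]
  ring

theorem expand_two_cyclotomic_of_odd {n : ℕ} (hn : Odd n) (h1 : n ≠ 1) :
    expand R 2 (cyclotomic n R) = cyclotomic n R * (cyclotomic n R).comp (-X) := by
  rw [cyclotomic_expand_eq_cyclotomic_mul Nat.prime_two hn.not_two_dvd_nat, mul_comm n,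
    cyclotomic_two_mul_of_odd hn h1, mul_comm]

theorem cyclotomic_four_mul_of_odd {n : ℕ} (hn : Odd n) (h1 : n ≠ 1) :
    cyclotomic (4 * n) R = (cyclotomic n R).comp (-X ^ 2) := by
  rw [show 4 * n = 2 * n * 2 by ring, ← cyclotomic_expand_eq_cyclotomic Nat.prime_two
    (dvd_mul_right 2 n), cyclotomic_two_mul_of_odd hn h1, expand_eq_comp_X_pow, comp_assoc,
    neg_comp, X_comp]

theorem exists_cyclotomic_four_mul_eq_sq_add_sq_of_odd {n : ℕ} (hn : Odd n) :
    ∃ x y : R[X], cyclotomic (4 * n) R = x ^ 2 + y ^ 2 := by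
  obtain rfl | h1 := eq_or_ne n 1
  · refine ⟨X, 1, ?_⟩
    rw [mul_one, show 4 = 2 * 2 by rfl, ← cyclotomic_expand_eq_cyclotomic Nat.prime_two dvd_rfl,
      cyclotomic_two, map_add, expand_X, map_one, one_pow]
  obtain ⟨a, b, hab⟩ :=
    exists_eq_sq_sub_X_mul_sq_of_expand_two_eq (expand_two_cyclotomic_of_odd (R := R) hn h1)
  refine ⟨a.comp (-X ^ 2), X * b.comp (-X ^ 2), ?_⟩
  rw [cyclotomic_four_mul_of_odd hn h1, hab, sub_comp, mul_comp, X_comp, pow_comp, pow_comp]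
  ring

end Polynomial

/-- For every positive integer `n`, the cyclotomic polynomial `Φ₄ₙ` over `ℚ` is a sum of
two squares in `ℚ[X]`. -/
theorem cyclotomic_sum_two_squares (n : ℕ) (hn : 0 < n) :
    ∃ x y : Polynomial ℚ, Polynomial.cyclotomic (4 * n) ℚ = x ^ 2 + y ^ 2 := by
  obtain ⟨k, m, hm, rfl⟩ := Nat.exists_eq_two_pow_mul_odd hn.ne'
  clear hn
  induction k with
  | zero => simpa using exists_cyclotomic_four_mul_eq_sq_add_sq_of_odd hm
  | succ k ih =>
    obtain ⟨x, y, hxy⟩ := ih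
    refine ⟨expand ℚ 2 x, expand ℚ 2 y, ?_⟩
    rw [show 4 * (2 ^ (k + 1) * m) = 4 * (2 ^ k * m) * 2 by ring,
      ← cyclotomic_expand_eq_cyclotomic Nat.prime_two (dvd_mul_of_dvd_left (by norm_num) _), hxy,
      map_add, map_pow, map_pow]
end
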